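/- arXiv:2207.05396 — 12 statements merged into one kernel-verified Lean document; each statement's English description precedes it below -/
import Mathlib

section
/- Let B be a primitive collection of nonzero proper ideals of O_K. Then: (1) η* is an O_K-Toeplitz array; (2) η*(g) ≤ η(g) for all g ∈ O_K; and (3) X_{η*} ⊆ X_η, the set X_{η*} is minimal, and every minimal subset of X_η equals X_{η*} (that is, X_{η*} is the unique minimal subset of X_η). -/
open Set Filter Topology NumberField

namespace BFree

variable (K : Type*) [Field K] [NumberField K]

/-- The set of multiples of a collection `B` of ideals of `𝓞 K`. -/
def MB (B : Set (Ideal (𝓞 K))) : Set (𝓞 K) := {g | ∃ b ∈ B, g ∈ b}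

open Classical in
/-- The indicator function `η` of the `B`-free elements. -/
noncomputable def eta (B : Set (Ideal (𝓞 K))) : 𝓞 K → Bool :=
  fun g => if g ∈ MB K B then false else true

/-- The shift action of `𝓞 K` on `{0,1}^{𝓞 K}`. -/
def shift (g : 𝓞 K) (x : 𝓞 K → Bool) : 𝓞 K → Bool := fun h => x (h + g)

/-- The orbit of a point under the shift action. -/
def orbit (x : 𝓞 K → Bool) : Set (𝓞 K → Bool) := {y | ∃ g : 𝓞 K, y = shift K g x}

/-- The orbit closure `X_x` of a point. -/
def orbitClosure (x : 𝓞 K → Bool) : Set (𝓞 K → Bool) := closure (orbit K x)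

/-- The set of `s`-periodic positions of `x`. -/
def Per (x : 𝓞 K → Bool) (s : Ideal (𝓞 K)) : Set (𝓞 K) :=
  {g | ∀ t ∈ s, x (g + t) = x g}

/-- `x` is an `𝓞 K`-Toeplitz array. -/
def IsToeplitz (x : 𝓞 K → Bool) : Prop :=
  ∀ g : 𝓞 K, ∃ s : Ideal (𝓞 K), s ≠ ⊥ ∧ g ∈ Per K x s

/-- A collection of ideals is pairwise coprime. -/
def PairwiseCoprime (C : Set (Ideal (𝓞 K))) : Prop :=
  ∀ c ∈ C, ∀ c' ∈ C, c ≠ c' → c ⊔ c' = ⊤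

/-- The collection `D` of nonzero ideals `d` such that `d·C ⊆ B` for some infinite
pairwise coprime collection `C` of nonzero proper ideals. -/
def Dset (B : Set (Ideal (𝓞 K))) : Set (Ideal (𝓞 K)) :=
  {d | d ≠ ⊥ ∧ ∃ C : Set (Ideal (𝓞 K)), C.Infinite ∧ (∀ c ∈ C, c ≠ ⊥ ∧ c ≠ ⊤) ∧
    PairwiseCoprime K C ∧ ∀ c ∈ C, d * c ∈ B}

/-- The primitive part of a collection of ideals. -/
def primPart (A : Set (Ideal (𝓞 K))) : Set (Ideal (𝓞 K)) :=
  {a | a ∈ A ∧ ¬ ∃ a' ∈ A, a < a'}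

/-- `B* = (B ∪ D)^prim`. -/
def Bstar (B : Set (Ideal (𝓞 K))) : Set (Ideal (𝓞 K)) :=
  primPart K (B ∪ Dset K B)

/-- `η*`, the indicator function of the `B*`-free elements. -/
noncomputable def etaStar (B : Set (Ideal (𝓞 K))) : 𝓞 K → Bool :=
  eta K (Bstar K B)

/-- A set is invariant under all shifts. -/
def IsInvariant (M : Set (𝓞 K → Bool)) : Prop :=
  ∀ g : 𝓞 K, ∀ x ∈ M, shift K g x ∈ M

/-- A minimal subset of the full shift: nonempty, closed, invariant, and the orbit of
each of its points is dense in it. -/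
def IsMinimalSubset (M : Set (𝓞 K → Bool)) : Prop :=
  M.Nonempty ∧ IsClosed M ∧ IsInvariant K M ∧ ∀ x ∈ M, M ⊆ closure (orbit K x)

/-- `B` is primitive: no ideal of `B` is contained in another one. -/
def Primitive (B : Set (Ideal (𝓞 K))) : Prop :=
  ∀ b ∈ B, ∀ b' ∈ B, b ≤ b' → b = b'

end BFree

/-!
The heart of the argument: a point `g` that is not a multiple of `B ∪ D` lies in a coset `g + s`,
`s ≠ 0`, containing no multiple of `B ∪ D`. Otherwise, with `I = (g)`, for every `m ≠ 0` some
`b ∈ B` has `g ∈ I m + b`, so every power of an ideal containing `m` that contains `b` also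
contains `I`. Enlarging `m` by the ideals already found produces `b_n ∈ B` with
`b_n = (b_n + I) w_n`, where the `w_n` are pairwise coprime and coprime to `I`. Some
`u = b_n + I` repeats infinitely often, so `u ∈ D`, and `g ∈ I ⊆ u`: a contradiction. This coset
property is exactly the Toeplitz property of `η*`.

Conversely, every `a ∈ D` behaves like an element of `B` on a suitable coset: pick `c` in its
family coprime to the current modulus, so `a c = a ∩ c ∈ B`, and use the Chinese remainder
theorem. Together these reproduce every finite window of `η*` in `η` along a whole coset of a
nonzero ideal. Cosets of a nonzero ideal have finite index, so such windows occur in every point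
of `X_η`. Hence `η*` lies in every orbit closure inside `X_η`, which gives minimality and
uniqueness.
-/

namespace Ideal

variable {R : Type*} [CommRing R]

theorem le_pow_of_le_mul_sup {I m b M : Ideal R} (hI : I ≤ I * m ⊔ b) (hM : m ≤ M) :
    ∀ k : ℕ, b ≤ M ^ k → I ≤ M ^ k
  | 0, _ => by simp
  | k + 1, hb => by
    have hIk : I ≤ M ^ k := le_pow_of_le_mul_sup hI hM k (hb.trans (pow_le_pow_right k.le_succ))
    exact hI.trans (sup_le (pow_succ M k ▸ mul_mono hIk hM) hb)

theorem exists_finset_forall_add_mem (m : Ideal R) [Finite (R ⧸ m)] :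
    ∃ G : Finset R, ∀ a, ∃ r ∈ G, a + r ∈ m := by
  classical
  have := Fintype.ofFinite (R ⧸ m)
  refine ⟨Finset.univ.image fun q : R ⧸ m => -q.out, fun a =>
    ⟨-(Quotient.mk m a).out, Finset.mem_image_of_mem _ (Finset.mem_univ _), ?_⟩⟩
  rw [← sub_eq_add_neg, ← Quotient.eq, Quotient.mk_out]

theorem exists_sub_mem_and_sub_mem {I J : Ideal R} (h : I ⊔ J = ⊤) (x y : R) :
    ∃ z, z - x ∈ I ∧ z - y ∈ J := by
  obtain ⟨i, hi, j, hj, hij⟩ := Submodule.mem_sup.mp (h ▸ Submodule.mem_top : (1 : R) ∈ I ⊔ J)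
  refine ⟨x * j + y * i, ?_, ?_⟩
  · convert I.mul_mem_left (y - x) hi using 1; linear_combination x * hij
  · convert J.mul_mem_left (x - y) hj using 1; linear_combination y * hij

variable [IsDedekindDomain R]

theorem finite_setOf_le {I : Ideal R} (hI : I ≠ ⊥) : {J | I ≤ J}.Finite := by
  have := UniqueFactorizationMonoid.fintypeSubtypeDvd I hI
  exact (Set.finite_coe_iff.mp (Finite.of_fintype {J : Ideal R // J ∣ I}) :
    {J : Ideal R | J ∣ I}.Finite).subset fun J hJ => dvd_iff_le.mpr hJ

theorem exists_sup_eq_top_of_infinite {C : Set (Ideal R)} (hC : C.Infinite)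
    (hpair : C.Pairwise (· ⊔ · = ⊤)) {a : Ideal R} (ha : a ≠ ⊥) : ∃ c ∈ C, c ⊔ a = ⊤ := by
  by_contra! h
  obtain ⟨c, hc, c', hc', hne, heq⟩ := hC.exists_ne_map_eq_of_mapsTo
    (fun c _ => (le_sup_right : a ≤ c ⊔ a)) (finite_setOf_le ha)
  refine h c' hc' (eq_top_iff.mpr ?_)
  calc ⊤ = c ⊔ c' := (hpair hc hc' hne).symm
    _ ≤ (c ⊔ a) ⊔ (c' ⊔ a) := sup_le_sup le_sup_left le_sup_left
    _ = c' ⊔ a := by rw [heq, sup_idem]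

theorem exists_eq_sup_mul_of_forall_le_pow {I b : Ideal R} (hI : I ≠ ⊥)
    (h : ∀ M : Ideal R, I ≤ M → ∀ k : ℕ, b ≤ M ^ k → I ≤ M ^ k) :
    ∃ w, b = (b ⊔ I) * w ∧ w ⊔ I = ⊤ := by
  obtain ⟨w, hw⟩ := Ideal.dvd_iff_le.mpr (le_sup_left : b ≤ b ⊔ I)
  refine ⟨w, hw, by_contra fun hne => ?_⟩
  obtain ⟨M, hM, hwM⟩ := exists_le_maximal _ hne
  have hpow : ∀ k : ℕ, b ⊔ I ≤ M ^ k := by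
    intro k
    induction k with
    | zero => simp
    | succ k ih =>
      have hb : b ≤ M ^ (k + 1) := hw ▸ pow_succ M k ▸ mul_mono ih (le_sup_left.trans hwM)
      exact sup_le hb (h M (le_sup_right.trans hwM) _ hb)
  refine hI (eq_bot_iff.mpr ?_)
  rw [← iInf_pow_eq_bot_of_isDomain M hM.ne_top]
  exact le_iInf fun k => le_sup_right.trans (hpow k)

theorem exists_seq_of_forall_le_mul_sup {B : Set (Ideal R)} (hB : ∀ b ∈ B, b ≠ ⊥) {I : Ideal R}
    (hI : I ≠ ⊥) (H : ∀ m ≠ ⊥, ∃ b ∈ B, I ≤ I * m ⊔ b) :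
    ∃ b : ℕ → Ideal R, (∀ n, b n ∈ B ∧ ∀ M, I ≤ M → ∀ k : ℕ, b n ≤ M ^ k → I ≤ M ^ k) ∧
      ∀ m n, m < n → ∀ M, b m ≤ M → b n ≤ M → I ≤ M := by
  refine exists_seq_of_forall_finset_exists
    (fun b => b ∈ B ∧ ∀ M, I ≤ M → ∀ k : ℕ, b ≤ M ^ k → I ≤ M ^ k)
    (fun a b => ∀ M, a ≤ M → b ≤ M → I ≤ M) fun s hs => ?_
  have hprod : ∏ x ∈ s, x ≠ ⊥ := Finset.prod_ne_zero_iff.mpr fun x hx => hB x (hs x hx).1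
  obtain ⟨b, hb, hIb⟩ := H _ (fun h => (mul_eq_bot.mp h).elim hI hprod)
  refine ⟨b, ⟨hb, fun M hM => le_pow_of_le_mul_sup hIb (mul_le_left.trans hM)⟩,
    fun x hx M hxM hbM => ?_⟩
  have hm : I * ∏ x ∈ s, x ≤ M :=
    mul_le_right.trans ((le_of_dvd (Finset.dvd_prod_of_mem _ hx)).trans hxM)
  simpa using le_pow_of_le_mul_sup hIb hm 1 (by simpa using hbM)

end Ideal

namespace BFree

section

variable {K : Type*} [Field K] {B : Set (Ideal (𝓞 K))}

theorem MB_mono {A A' : Set (Ideal (𝓞 K))} (h : A ⊆ A') : MB K A ⊆ MB K A' :=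
  fun _ ⟨a, ha, hga⟩ => ⟨a, h ha, hga⟩

theorem eta_eq_false_iff {g : 𝓞 K} : eta K B g = false ↔ g ∈ MB K B := by
  unfold eta; split_ifs with h <;> simp [h]

theorem eta_eq_true_iff {g : 𝓞 K} : eta K B g = true ↔ g ∉ MB K B := by
  unfold eta; split_ifs with h <;> simp [h]

theorem ne_bot_of_mem_union (hB : ∀ b ∈ B, b ≠ ⊥) {a : Ideal (𝓞 K)} (ha : a ∈ B ∪ Dset K B) :
    a ≠ ⊥ :=
  ha.elim (hB a) And.left

theorem mem_Dset_of_infinite (hB : ∀ b ∈ B, b ≠ ⊥) {d : Ideal (𝓞 K)} (hd : d ≠ ⊥) {N : Set ℕ}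
    (hN : N.Infinite) {w : ℕ → Ideal (𝓞 K)} (hwB : ∀ n ∈ N, d * w n ∈ B)
    (hw : ∀ n ∈ N, w n ≠ ⊤) (hpair : Pairwise fun m n => w m ⊔ w n = ⊤) : d ∈ Dset K B := by
  have hinj : InjOn w N := fun m hm n hn hmn => by_contra fun hne =>
    hw n hn (by simpa [hmn] using hpair hne)
  refine ⟨hd, w '' N, hN.image hinj, ?_, ?_, ?_⟩
  · rintro _ ⟨n, hn, rfl⟩
    exact ⟨fun h => hB _ (hwB n hn) (by rw [h, Ideal.mul_bot]), hw n hn⟩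
  · rintro _ ⟨m, -, rfl⟩ _ ⟨n, -, rfl⟩ hne
    exact hpair fun h => hne (congrArg w h)
  · rintro _ ⟨n, hn, rfl⟩
    exact hwB n hn

theorem shift_shift (g g' : 𝓞 K) (x : 𝓞 K → Bool) :
    shift K g (shift K g' x) = shift K (g' + g) x := by
  funext h
  simp [shift, add_assoc, add_comm g g']

theorem continuous_shift (g : 𝓞 K) : Continuous (shift K g) :=
  continuous_pi fun h => continuous_apply (h + g)

theorem mem_orbitClosure_self (x : 𝓞 K → Bool) : x ∈ orbitClosure K x :=
  subset_closure ⟨0, funext fun h => by simp [shift]⟩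

theorem mem_orbitClosure_iff {x y : 𝓞 K → Bool} :
    y ∈ orbitClosure K x ↔ ∀ F : Finset (𝓞 K), ∃ g, ∀ h ∈ F, x (h + g) = y h := by
  constructor
  · intro hy F
    have hopen : IsOpen ((F : Set (𝓞 K)).pi fun h => {y h}) :=
      isOpen_set_pi F.finite_toSet fun _ _ => isOpen_discrete _
    obtain ⟨z, hz, g, rfl⟩ := mem_closure_iff.mp hy _ hopen fun h _ => rfl
    exact ⟨g, hz⟩
  · intro H
    refine mem_closure_iff.mpr fun U hU hyU => ?_
    obtain ⟨I, u, hu, hsub⟩ := isOpen_pi_iff.mp hU y hyU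
    obtain ⟨g, hg⟩ := H I
    refine ⟨shift K g x, hsub fun h hh => ?_, g, rfl⟩
    rw [shift, hg h hh]
    exact (hu h hh).2

theorem shift_mem_orbitClosure {x y : 𝓞 K → Bool} (hy : y ∈ orbitClosure K x) (g : 𝓞 K) :
    shift K g y ∈ orbitClosure K x := by
  refine closure_mono ?_ (image_closure_subset_closure_image (continuous_shift g) ⟨y, hy, rfl⟩)
  rintro _ ⟨_, ⟨g', rfl⟩, rfl⟩
  exact ⟨g' + g, shift_shift g g' x⟩

theorem orbitClosure_subset_of_mem {x y : 𝓞 K → Bool} (hy : y ∈ orbitClosure K x) :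
    orbitClosure K y ⊆ orbitClosure K x :=
  closure_minimal (by rintro _ ⟨g, rfl⟩; exact shift_mem_orbitClosure hy g) isClosed_closure

theorem isMinimalSubset_orbitClosure {x : 𝓞 K → Bool}
    (h : ∀ y ∈ orbitClosure K x, x ∈ orbitClosure K y) : IsMinimalSubset K (orbitClosure K x) :=
  ⟨⟨x, mem_orbitClosure_self x⟩, isClosed_closure, fun g _ hy => shift_mem_orbitClosure hy g,
    fun y hy => orbitClosure_subset_of_mem (h y hy)⟩

theorem IsMinimalSubset.eq_orbitClosure {M : Set (𝓞 K → Bool)} (hM : IsMinimalSubset K M)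
    {x : 𝓞 K → Bool} (hx : x ∈ M) : M = orbitClosure K x :=
  (hM.2.2.2 x hx).antisymm <| closure_minimal (by rintro _ ⟨g, rfl⟩; exact hM.2.2.1 g x hx) hM.2.1

theorem IsToeplitz.exists_forall_mem_Per {x : 𝓞 K → Bool} (hx : IsToeplitz K x)
    (F : Finset (𝓞 K)) : ∃ m : Ideal (𝓞 K), m ≠ ⊥ ∧ ∀ h ∈ F, h ∈ Per K x m := by
  classical
  induction F using Finset.induction_on with
  | empty => exact ⟨⊤, top_ne_bot, by simp⟩
  | insert h F _ ih =>
    obtain ⟨m, hm, hF⟩ := ih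
    obtain ⟨s, hs, hh⟩ := hx h
    refine ⟨m * s, fun h => (Ideal.mul_eq_bot.mp h).elim hm hs, ?_⟩
    rintro h' hh' t ht
    rcases Finset.mem_insert.mp hh' with rfl | hh'
    exacts [hh t (Ideal.mul_le_right ht), hF h' hh' t (Ideal.mul_le_left ht)]

variable [NumberField K]

theorem exists_mem_primPart_le {A : Set (Ideal (𝓞 K))} {a : Ideal (𝓞 K)} (ha : a ∈ A) :
    ∃ a' ∈ primPart K A, a ≤ a' := by
  obtain ⟨a', ⟨ha', haa'⟩, hmax⟩ := set_has_maximal_iff_noetherian.mpr inferInstance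
    {x | x ∈ A ∧ a ≤ x} ⟨a, ha, le_rfl⟩
  exact ⟨a', ⟨ha', fun ⟨a'', ha'', hlt⟩ => hmax a'' ⟨ha'', haa'.trans hlt.le⟩ hlt⟩, haa'⟩

theorem MB_Bstar : MB K (Bstar K B) = MB K (B ∪ Dset K B) := by
  refine (MB_mono fun a ha => ha.1).antisymm fun g ⟨a, ha, hga⟩ => ?_
  obtain ⟨a', ha', haa'⟩ := exists_mem_primPart_le ha
  exact ⟨a', ha', haa' hga⟩

theorem etaStar_eq_false_iff {g : 𝓞 K} : etaStar K B g = false ↔ g ∈ MB K (B ∪ Dset K B) := by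
  rw [etaStar, eta_eq_false_iff, MB_Bstar]

theorem etaStar_eq_true_iff {g : 𝓞 K} : etaStar K B g = true ↔ g ∉ MB K (B ∪ Dset K B) := by
  rw [etaStar, eta_eq_true_iff, MB_Bstar]

theorem etaStar_le_eta (g : 𝓞 K) : etaStar K B g ≤ eta K B g := by
  cases h : eta K B g
  · rw [etaStar_eq_false_iff.mpr (MB_mono subset_union_left (eta_eq_false_iff.mp h))]
  · exact Bool.le_true _

theorem exists_sup_eq_top_mul_mem {a m : Ideal (𝓞 K)} (ha : a ∈ B ∪ Dset K B) (hm : m ≠ ⊥) :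
    ∃ c, c ⊔ m = ⊤ ∧ a * c ∈ B := by
  rcases ha with ha | ⟨-, C, hC, -, hpair, hCB⟩
  · exact ⟨⊤, top_sup_eq m, by rwa [Ideal.mul_top]⟩
  · obtain ⟨c, hc, hcm⟩ := Ideal.exists_sup_eq_top_of_infinite hC hpair hm
    exact ⟨c, hcm, hCB c hc⟩

theorem exists_le_sup_of_mem_union {a s : Ideal (𝓞 K)} (ha : a ∈ B ∪ Dset K B) (hs : s ≠ ⊥) :
    ∃ b ∈ B, a ≤ s ⊔ b := by
  obtain ⟨c, hcs, hac⟩ := exists_sup_eq_top_mul_mem ha hs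
  refine ⟨a * c, hac, ?_⟩
  rw [Ideal.sup_mul_eq_of_coprime_right ((sup_comm s c).trans hcs)]
  exact le_sup_right

theorem exists_forall_notMem_sup (hB : ∀ b ∈ B, b ≠ ⊥) {g : 𝓞 K}
    (hg : g ∉ MB K (B ∪ Dset K B)) : ∃ s ≠ ⊥, ∀ b ∈ B, g ∉ s ⊔ b := by
  by_contra! H
  set I := Ideal.span {g}
  have hgI : g ∈ I := Ideal.mem_span_singleton_self g
  have hI : I ≠ ⊥ := by
    obtain ⟨b, hb, -⟩ := H ⊤ top_ne_bot
    refine fun hI => hg ⟨b, .inl hb, ?_⟩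
    rw [Ideal.span_singleton_eq_bot.mp hI]
    exact zero_mem b
  obtain ⟨b, hb, hcop⟩ := Ideal.exists_seq_of_forall_le_mul_sup hB hI fun m hm =>
    (H (I * m) fun h => (Ideal.mul_eq_bot.mp h).elim hI hm).imp
      fun b ⟨hb, hgb⟩ => ⟨hb, (Ideal.span_singleton_le_iff_mem _).mpr hgb⟩
  choose w hbw hwI using fun n => Ideal.exists_eq_sup_mul_of_forall_le_pow hI (hb n).2
  have hpair : Pairwise fun m n => w m ⊔ w n = ⊤ := by
    have key : ∀ m n, m < n → w m ⊔ w n = ⊤ := fun m n hmn => by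
      have hbm : b m ≤ w m ⊔ w n := (hbw m).le.trans (Ideal.mul_le_right.trans le_sup_left)
      have hbn : b n ≤ w m ⊔ w n := (hbw n).le.trans (Ideal.mul_le_right.trans le_sup_right)
      rw [eq_top_iff, ← hwI n]
      exact sup_le le_sup_right (hcop m n hmn _ hbm hbn)
    intro m n hmn
    rcases hmn.lt_or_gt with h | h
    exacts [key m n h, sup_comm (w m) (w n) ▸ key n m h]
  let f : ℕ → {J // I ≤ J} := fun n => ⟨b n ⊔ I, le_sup_right⟩
  have : Finite {J // I ≤ J} := (Ideal.finite_setOf_le hI).to_subtype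
  obtain ⟨u, hu⟩ := Finite.exists_infinite_fiber f
  have hbu : ∀ n ∈ f ⁻¹' {u}, b n = u.1 * w n := fun n hn => by
    rw [hbw n, show b n ⊔ I = u.1 from congrArg Subtype.val hn]
  have hu0 : u.1 ≠ ⊥ := fun h => hI (eq_bot_iff.mpr (h ▸ u.2))
  refine hg ⟨u, .inr (mem_Dset_of_infinite hB hu0 (infinite_coe_iff.mp hu)
    (fun n hn => hbu n hn ▸ (hb n).1) (fun n hn htop => hg ⟨b n, .inl (hb n).1, ?_⟩) hpair),
    u.2 hgI⟩
  rw [hbu n hn, htop, Ideal.mul_top]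
  exact u.2 hgI

theorem exists_forall_add_notMem_MB (hB : ∀ b ∈ B, b ≠ ⊥) {g : 𝓞 K}
    (hg : g ∉ MB K (B ∪ Dset K B)) :
    ∃ s : Ideal (𝓞 K), s ≠ ⊥ ∧ ∀ t ∈ s, g + t ∉ MB K (B ∪ Dset K B) := by
  obtain ⟨s, hs, hsB⟩ := exists_forall_notMem_sup hB hg
  refine ⟨s, hs, fun t ht ⟨a, ha, hgta⟩ => ?_⟩
  obtain ⟨b, hb, hab⟩ := exists_le_sup_of_mem_union ha hs
  refine hsB b hb ?_
  simpa using sub_mem (hab hgta) (Submodule.mem_sup_left ht)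

theorem etaStar_isToeplitz (hB : ∀ b ∈ B, b ≠ ⊥) : IsToeplitz K (etaStar K B) := by
  intro g
  by_cases hg : g ∈ MB K (B ∪ Dset K B)
  · rw [← MB_Bstar] at hg
    obtain ⟨b, hb, hgb⟩ := hg
    refine ⟨b, ne_bot_of_mem_union hB hb.1, fun t ht => ?_⟩
    rw [etaStar_eq_false_iff.mpr ⟨b, hb.1, hgb⟩, etaStar_eq_false_iff.mpr ⟨b, hb.1, add_mem hgb ht⟩]
  · obtain ⟨s, hs, hfree⟩ := exists_forall_add_notMem_MB hB hg
    exact ⟨s, hs, fun t ht => by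
      rw [etaStar_eq_true_iff.mpr hg, etaStar_eq_true_iff.mpr (hfree t ht)]⟩

theorem exists_modulus_eta_eq_etaStar (hB : ∀ b ∈ B, b ≠ ⊥) (h : 𝓞 K) :
    ∃ s : Ideal (𝓞 K), s ≠ ⊥ ∧ ∀ m : Ideal (𝓞 K), m ≠ ⊥ → m ≤ s → ∀ g ∈ s,
      ∃ m' : Ideal (𝓞 K), m' ≠ ⊥ ∧ m' ≤ m ∧
        ∃ g', g' - g ∈ m ∧ ∀ t ∈ m', eta K B (h + (g' + t)) = etaStar K B h := by
  cases hh : etaStar K B h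
  · -- `h ∈ a ∈ B ∪ D`: take `c` coprime to `m` with `a c ∈ B` and move `g` so that `h + g' ∈ c`.
    obtain ⟨a, ha, hha⟩ := etaStar_eq_false_iff.mp hh
    refine ⟨a, ne_bot_of_mem_union hB ha, fun m hm hma g hga => ?_⟩
    obtain ⟨c, hcm, hac⟩ := exists_sup_eq_top_mul_mem ha hm
    obtain ⟨g', hg'g, hg'c⟩ := Ideal.exists_sub_mem_and_sub_mem ((sup_comm m c).trans hcm) g (-h)
    have hc : c ≠ ⊥ := fun hc => hB _ hac (by rw [hc, Ideal.mul_bot])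
    refine ⟨m * c, fun h => (Ideal.mul_eq_bot.mp h).elim hm hc, Ideal.mul_le_left, g', hg'g,
      fun t ht => eta_eq_false_iff.mpr ⟨a * c, hac, ?_⟩⟩
    have hac_cop : a ⊔ c = ⊤ := eq_top_iff.mpr (hcm ▸ sup_le le_sup_right (hma.trans le_sup_left))
    have hg' : g' ∈ a := by simpa using add_mem hga (hma hg'g)
    rw [Ideal.mul_eq_inf_of_coprime hac_cop]
    refine ⟨add_mem hha (add_mem hg' (hma (Ideal.mul_le_left ht))), ?_⟩
    simpa [add_comm, add_left_comm] using add_mem hg'c (Ideal.mul_le_right ht)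
  · obtain ⟨s, hs, hfree⟩ := exists_forall_add_notMem_MB hB (etaStar_eq_true_iff.mp hh)
    refine ⟨s, hs, fun m hm hms g hg => ⟨m, hm, le_rfl, g, by simp, fun t ht => ?_⟩⟩
    exact eta_eq_true_iff.mpr fun hmem =>
      hfree _ (add_mem hg (hms ht)) (MB_mono subset_union_left hmem)

theorem exists_window_eta_eq_etaStar (hB : ∀ b ∈ B, b ≠ ⊥) (F : Finset (𝓞 K))
    (s : Ideal (𝓞 K)) (hs : s ≠ ⊥) : ∃ m : Ideal (𝓞 K), m ≠ ⊥ ∧ m ≤ s ∧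
      ∃ g ∈ s, ∀ h ∈ F, ∀ t ∈ m, eta K B (h + (g + t)) = etaStar K B h := by
  classical
  induction F using Finset.induction_on generalizing s with
  | empty => exact ⟨s, hs, le_rfl, 0, zero_mem s, by simp⟩
  | insert h F _ ih =>
    obtain ⟨sh, hsh, hstep⟩ := exists_modulus_eta_eq_etaStar hB h
    obtain ⟨m, hm, hms, g, hg, hF⟩ := ih (s * sh) fun h => (Ideal.mul_eq_bot.mp h).elim hs hsh
    obtain ⟨m', hm', hm'm, g', hg'g, hh⟩ :=
      hstep m hm (hms.trans Ideal.mul_le_right) g (Ideal.mul_le_right hg)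
    refine ⟨m', hm', hm'm.trans (hms.trans Ideal.mul_le_left), g', ?_, ?_⟩
    · simpa using add_mem (Ideal.mul_le_left hg) (hms.trans Ideal.mul_le_left hg'g)
    · intro h' hh' t ht
      rcases Finset.mem_insert.mp hh' with rfl | hh'
      · exact hh t ht
      · rw [← hF h' hh' _ (add_mem hg'g (hm'm ht))]
        congr 1
        abel

open scoped Pointwise in
theorem mem_orbitClosure_of_window {x y z : 𝓞 K → Bool} (hx : x ∈ orbitClosure K y)
    (hwin : ∀ F : Finset (𝓞 K), ∃ m : Ideal (𝓞 K), m ≠ ⊥ ∧ ∃ g, ∀ h ∈ F, ∀ t ∈ m,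
      y (h + (g + t)) = z h) :
    z ∈ orbitClosure K x := by
  classical
  refine mem_orbitClosure_iff.mpr fun F => ?_
  obtain ⟨m, hm, g, hg⟩ := hwin F
  have := Ideal.finiteQuotientOfFreeOfNeBot m hm
  obtain ⟨G, hG⟩ := Ideal.exists_finset_forall_add_mem m
  obtain ⟨g₀, hg₀⟩ := mem_orbitClosure_iff.mp hx (F + G)
  obtain ⟨r, hr, hrm⟩ := hG (g₀ - g)
  refine ⟨r, fun h hh => ?_⟩
  rw [← hg₀ _ (Finset.add_mem_add hh hr), ← hg h hh _ hrm]
  congr 1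
  abel

theorem etaStar_mem_orbitClosure (hB : ∀ b ∈ B, b ≠ ⊥) {x : 𝓞 K → Bool}
    (hx : x ∈ orbitClosure K (eta K B)) : etaStar K B ∈ orbitClosure K x :=
  mem_orbitClosure_of_window hx fun F => by
    obtain ⟨m, hm, -, g, -, hg⟩ := exists_window_eta_eq_etaStar hB F ⊤ top_ne_bot
    exact ⟨m, hm, g, hg⟩

theorem etaStar_mem_orbitClosure_of_mem (hB : ∀ b ∈ B, b ≠ ⊥) {x : 𝓞 K → Bool}
    (hx : x ∈ orbitClosure K (etaStar K B)) : etaStar K B ∈ orbitClosure K x :=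
  mem_orbitClosure_of_window hx fun F => by
    obtain ⟨m, hm, hF⟩ := (etaStar_isToeplitz hB).exists_forall_mem_Per F
    exact ⟨m, hm, 0, fun h hh t ht => by simpa using hF h hh t ht⟩

end

theorem etaStar_toeplitz_and_unique_minimal_general
    (K : Type*) [Field K] [NumberField K]
    (B : Set (Ideal (𝓞 K)))
    (hB : ∀ b ∈ B, b ≠ ⊥ ∧ b ≠ ⊤) :
    IsToeplitz K (etaStar K B) ∧
    (∀ g : 𝓞 K, etaStar K B g ≤ eta K B g) ∧
    orbitClosure K (etaStar K B) ⊆ orbitClosure K (eta K B) ∧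
    IsMinimalSubset K (orbitClosure K (etaStar K B)) ∧
    (∀ M : Set (𝓞 K → Bool), M ⊆ orbitClosure K (eta K B) → IsMinimalSubset K M →
      M = orbitClosure K (etaStar K B)) := by
  have hB₀ : ∀ b ∈ B, b ≠ ⊥ := fun b hb => (hB b hb).1
  refine ⟨etaStar_isToeplitz hB₀, etaStar_le_eta,
    orbitClosure_subset_of_mem (etaStar_mem_orbitClosure hB₀ (mem_orbitClosure_self _)),
    isMinimalSubset_orbitClosure fun y hy => etaStar_mem_orbitClosure_of_mem hB₀ hy,
    fun M hM hmin => ?_⟩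
  obtain ⟨x, hx⟩ := hmin.1
  have hxM : orbitClosure K x ⊆ M := (hmin.eq_orbitClosure hx).ge
  exact hmin.eq_orbitClosure (hxM (etaStar_mem_orbitClosure hB₀ (hM hx)))

/-- **Theorem A.** `η*` is an `𝓞 K`-Toeplitz array, `η* ≤ η`, and `X_{η*}` is the unique
minimal subset of `X_η`. -/
theorem etaStar_toeplitz_and_unique_minimal
    (K : Type*) [Field K] [NumberField K]
    (B : Set (Ideal (𝓞 K)))
    (hB : ∀ b ∈ B, b ≠ ⊥ ∧ b ≠ ⊤)
    (hprim : Primitive K B) :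
    IsToeplitz K (etaStar K B) ∧
    (∀ g : 𝓞 K, etaStar K B g ≤ eta K B g) ∧
    orbitClosure K (etaStar K B) ⊆ orbitClosure K (eta K B) ∧
    IsMinimalSubset K (orbitClosure K (etaStar K B)) ∧
    (∀ M : Set (𝓞 K → Bool), M ⊆ orbitClosure K (eta K B) → IsMinimalSubset K M →
      M = orbitClosure K (etaStar K B)) :=
  etaStar_toeplitz_and_unique_minimal_general K B hB

end BFree
end

section
/- Let B be a primitive collection of nonzero proper ideals of O_K with D = ∅. Let r ∈ O_K and let a be a nonzero ideal of O_K. If r + a ⊆ M_B, then there exists b ∈ B such that (r) + a ⊆ b, where (r) denotes the principal ideal generated by r. -/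
/-!
Suppose no `b ∈ B` contains `(r) + a`. Given a nonzero ideal `J`, the Chinese remainder theorem
yields `t ∈ a` such that, at every prime `p ∣ J`, the element `r + t` is divisible by no higher
power of `p` than `a` is. Some `b ∈ B` contains `r + t`; writing `b = (b + a) c`, the cofactor
`c` is proper (else `(r) + a ⊆ b`) and prime to `J`. Repeating this with `J` the product of the
cofactors found so far gives infinitely many pairwise coprime `c` with `(b + a) c ∈ B`. As
`b + a` ranges over the finitely many divisors of `a`, one `d` occurs infinitely often, and
then `d ∈ D`.
-/

open Set Filter Topology NumberField

open Function UniqueFactorizationMonoid Multiset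

theorem UniqueFactorizationMonoid.pow_dvd_iff_le_count {α : Type*} [CommMonoidWithZero α]
    [NormalizationMonoid α] [UniqueFactorizationMonoid α] [DecidableEq α] {p x : α}
    (hp : Irreducible p) (hnorm : normalize p = p) (hx : x ≠ 0) {k : ℕ} :
    p ^ k ∣ x ↔ k ≤ count p (normalizedFactors x) := by
  rw [dvd_iff_normalizedFactors_le_normalizedFactors (pow_ne_zero k hp.ne_zero) hx,
    hp.normalizedFactors_pow, hnorm, ← le_count_iff_replicate_le]

namespace Ideal

section CommRing

variable {R : Type*} [CommRing R]

theorem exists_mem_forall_sub_mem_of_pairwise_isCoprime {ι : Type*} [Fintype ι] [DecidableEq ι]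
    {I : ι → Ideal R} (hI : Pairwise (IsCoprime on I)) {a : Ideal R} {x : ι → R}
    (hx : ∀ i, x i ∈ a) : ∃ t ∈ a, ∀ i, t - x i ∈ I i := by
  choose e he using fun j => exists_forall_sub_mem_ideal hI (Pi.single j 1)
  refine ⟨∑ j, x j * e j, a.sum_mem fun j _ => a.mul_mem_right _ (hx j), fun i => ?_⟩
  have hsum : ∑ j, x j * e j - x i = ∑ j, x j * (e j - (Pi.single j 1 : ι → R) i) := by
    simp [mul_sub, Finset.sum_sub_distrib, Pi.single_apply]
  rw [hsum]
  exact (I i).sum_mem fun j _ => (I i).mul_mem_left _ (he j i)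

theorem exists_add_notMem_of_not_le {a I : Ideal R} (h : ¬ a ≤ I) (r : R) :
    ∃ t ∈ a, r + t ∉ I := by
  by_contra! hr
  refine h fun t ht => ?_
  simpa using I.sub_mem (hr t ht) (hr 0 a.zero_mem)

theorem exists_mem_forall_add_notMem {ι : Type*} [Fintype ι] {I : ι → Ideal R}
    (hI : Pairwise (IsCoprime on I)) {a : Ideal R} (ha : ∀ i, ¬ a ≤ I i) (r : R) :
    ∃ t ∈ a, ∀ i, r + t ∉ I i := by
  classical
  choose s hsa hs using fun i => exists_add_notMem_of_not_le (ha i) r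
  obtain ⟨t, hta, hts⟩ := exists_mem_forall_sub_mem_of_pairwise_isCoprime hI hsa
  refine ⟨t, hta, fun i hrt => hs i ?_⟩
  convert (I i).sub_mem hrt (hts i) using 1
  ring

end CommRing

section DedekindDomain

variable {R : Type*} [CommRing R] [IsDedekindDomain R]

theorem count_normalizedFactors_sup {I J : Ideal R} (hI : I ≠ ⊥) (hJ : J ≠ ⊥) (p : Ideal R) :
    count p (normalizedFactors (I ⊔ J)) =
      min (count p (normalizedFactors I)) (count p (normalizedFactors J)) := by
  rw [sup_eq_prod_inf_factors hI hJ, normalizedFactors_prod_inter_eq_inter, count_inter]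

theorem not_le_pow_count_succ {a p : Ideal R} (ha : a ≠ ⊥) (hp : Prime p) :
    ¬ a ≤ p ^ (count p (normalizedFactors a) + 1) := by
  rw [← dvd_iff_le, pow_dvd_iff_le_count hp.irreducible (normalize_eq p) ha]
  omega

/-- With `v` the `p`-adic valuation, `v (b ⊔ a) = min (v b) (v a)` is `< v b` because `p ∣ c`,
so it equals `v a`. -/
theorem le_pow_count_succ_of_dvd_cofactor {a b c p : Ideal R}
    (ha : a ≠ ⊥) (hb : b ≠ ⊥) (hp : Prime p) (hbc : b = (b ⊔ a) * c) (hpc : p ∣ c) :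
    b ≤ p ^ (count p (normalizedFactors a) + 1) := by
  have hd : b ⊔ a ≠ ⊥ := ne_bot_of_le_ne_bot ha le_sup_right
  have hc : c ≠ ⊥ := by
    rintro rfl
    exact hb (hbc.trans (mul_bot _))
  have hcount : count p (normalizedFactors b) =
      count p (normalizedFactors (b ⊔ a)) + count p (normalizedFactors c) := by
    conv_lhs => rw [hbc]
    rw [normalizedFactors_mul hd hc, count_add]
  have hpc' : 1 ≤ count p (normalizedFactors c) :=
    one_le_count_iff_mem.2 ((UniqueFactorizationMonoid.mem_normalizedFactors_iff hc).2 ⟨hp, hpc⟩)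
  have hsup := count_normalizedFactors_sup hb ha p
  rw [← dvd_iff_le, pow_dvd_iff_le_count hp.irreducible (normalize_eq p) hb]
  omega

theorem isMaximal_of_mem_normalizedFactors {I p : Ideal R} (hp : p ∈ normalizedFactors I) :
    p.IsMaximal :=
  have hp' := prime_of_normalized_factor p hp
  (isPrime_of_prime hp').isMaximal hp'.ne_zero

end DedekindDomain

end Ideal

namespace BFree

section DedekindDomain

variable {R : Type*} [CommRing R] [IsDedekindDomain R] {B : Set (Ideal R)} {r : R} {a : Ideal R}

theorem exists_mul_mem_sup_eq_top (hB : ⊥ ∉ B) (ha : a ≠ ⊥)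
    (h : ∀ t ∈ a, ∃ b ∈ B, r + t ∈ b) (hr : ∀ b ∈ B, ¬ Ideal.span {r} ⊔ a ≤ b)
    {J : Ideal R} (hJ : J ≠ ⊥) :
    ∃ d c, a ≤ d ∧ c ≠ ⊥ ∧ c ≠ ⊤ ∧ d * c ∈ B ∧ c ⊔ J = ⊤ := by
  let P := (normalizedFactors J).toFinset
  have hP : ∀ p ∈ P, p.IsMaximal := fun p hp =>
    Ideal.isMaximal_of_mem_normalizedFactors (Multiset.mem_toFinset.1 hp)
  obtain ⟨t, hta, ht⟩ := Ideal.exists_mem_forall_add_notMem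
    (I := fun p : P => p.1 ^ (count p.1 (normalizedFactors a) + 1))
    (fun p q hpq => (Ideal.isCoprime_iff_sup_eq.2 <| (hP p p.2).coprime_of_ne (hP q q.2)
      (Subtype.coe_injective.ne hpq)).pow)
    (fun p => Ideal.not_le_pow_count_succ ha
      (prime_of_normalized_factor p.1 (Multiset.mem_toFinset.1 p.2))) r
  obtain ⟨b, hbB, hrtb⟩ := h t hta
  obtain ⟨c, hbc⟩ : b ⊔ a ∣ b := Ideal.dvd_iff_le.2 le_sup_left
  have hb : b ≠ ⊥ := fun hb => hB (hb ▸ hbB)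
  refine ⟨b ⊔ a, c, le_sup_right, ?_, ?_, hbc ▸ hbB, ?_⟩
  · rintro rfl
    exact hb (hbc.trans (Ideal.mul_bot _))
  · rintro rfl
    have hab : a ≤ b := le_sup_right.trans (hbc.trans (Ideal.mul_top _)).ge
    refine hr b hbB (sup_le ((Ideal.span_singleton_le_iff_mem _).2 ?_) hab)
    simpa using b.sub_mem hrtb (hab hta)
  · by_contra hcJ
    obtain ⟨p, hpmax, hcJp⟩ := Ideal.exists_le_maximal _ hcJ
    have hp0 : p ≠ ⊥ := ne_bot_of_le_ne_bot hJ (le_sup_right.trans hcJp)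
    have hpP : p ∈ P := Multiset.mem_toFinset.2 <|
      (Ideal.mem_normalizedFactors_iff hJ).2 ⟨hpmax.isPrime, le_sup_right.trans hcJp⟩
    refine ht ⟨p, hpP⟩ (Ideal.le_pow_count_succ_of_dvd_cofactor ha hb
      ((Ideal.prime_iff_isPrime hp0).2 hpmax.isPrime) hbc ?_ hrtb)
    exact Ideal.dvd_iff_le.2 (le_sup_left.trans hcJp)

theorem exists_infinite_pairwise_coprime_mul_mem (hB : ⊥ ∉ B) (ha : a ≠ ⊥)
    (h : ∀ t ∈ a, ∃ b ∈ B, r + t ∈ b) (hr : ∀ b ∈ B, ¬ Ideal.span {r} ⊔ a ≤ b) :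
    ∃ d ≠ ⊥, ∃ C : Set (Ideal R), C.Infinite ∧ (∀ c ∈ C, c ≠ ⊥ ∧ c ≠ ⊤) ∧
      C.Pairwise (fun c c' => c ⊔ c' = ⊤) ∧ ∀ c ∈ C, d * c ∈ B := by
  let good : Ideal R × Ideal R → Prop := fun x => a ≤ x.1 ∧ x.2 ≠ ⊥ ∧ x.2 ≠ ⊤ ∧ x.1 * x.2 ∈ B
  obtain ⟨f, hf, hcop⟩ := exists_seq_of_forall_finset_exists good (fun x y => x.2 ⊔ y.2 = ⊤)
    fun s hs => by
      have hJ : ∏ x ∈ s, x.2 ≠ ⊥ := Finset.prod_ne_zero_iff.2 fun x hx => (hs x hx).2.1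
      obtain ⟨d, c, had, hc0, hcT, hdc, hcJ⟩ := exists_mul_mem_sup_eq_top hB ha h hr hJ
      refine ⟨(d, c), ⟨had, hc0, hcT, hdc⟩, fun x hx => eq_top_iff.2 ?_⟩
      rw [← hcJ]
      exact (sup_le_sup_left (Ideal.le_of_dvd (Finset.dvd_prod_of_mem Prod.snd hx)) c).trans
        (sup_comm c x.2).le
  have hcop' : Pairwise fun m n => (f m).2 ⊔ (f n).2 = ⊤ := fun m n hmn =>
    hmn.lt_or_gt.elim (hcop m n) fun hnm => (sup_comm _ _).trans (hcop n m hnm)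
  have hinj : Injective fun n => (f n).2 := fun m n hmn => by
    by_contra hne
    exact (hf n).2.2.1 (by simpa [hmn] using hcop' hne)
  have := fintypeSubtypeDvd a ha
  obtain ⟨d, hd⟩ := Finite.exists_infinite_fiber
    fun n => (⟨(f n).1, Ideal.dvd_iff_le.2 (hf n).1⟩ : {d // d ∣ a})
  refine ⟨d, ne_zero_of_dvd_ne_zero ha d.2, _, (Set.infinite_coe_iff.1 hd).image hinj.injOn,
    ?_, ?_, ?_⟩
  · rintro _ ⟨n, -, rfl⟩
    exact ⟨(hf n).2.1, (hf n).2.2.1⟩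
  · rintro _ ⟨m, -, rfl⟩ _ ⟨n, -, rfl⟩ hmn
    exact hcop' fun h => hmn (h ▸ rfl)
  · rintro _ ⟨n, hn, rfl⟩
    have hdn : (f n).1 = d := congrArg Subtype.val hn
    exact hdn ▸ (hf n).2.2.2

end DedekindDomain

theorem coset_in_multiples_general
    (K : Type*) [Field K] [NumberField K]
    (B : Set (Ideal (𝓞 K)))
    (hB : ∀ b ∈ B, b ≠ ⊥ ∧ b ≠ ⊤)
    (hD : Dset K B = ∅)
    (r : 𝓞 K) (a : Ideal (𝓞 K)) (ha : a ≠ ⊥)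
    (h : ∀ t ∈ a, r + t ∈ MB K B) :
    ∃ b ∈ B, Ideal.span {r} ⊔ a ≤ b := by
  by_contra! hr
  obtain ⟨d, hd, C, hC, hCprop, hCcop, hdC⟩ :=
    exists_infinite_pairwise_coprime_mul_mem (fun hbot => (hB ⊥ hbot).1 rfl) ha h hr
  exact (Set.eq_empty_iff_forall_notMem.1 hD) d
    ⟨hd, C, hC, hCprop, fun c hc c' hc' hne => hCcop hc hc' hne, hdC⟩

/-- **Theorem.** If `D = ∅` and the coset `r + 𝔞` consists of `B`-multiples, then
`(r) + 𝔞 ⊆ 𝔟` for some `𝔟 ∈ B`. -/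
theorem coset_in_multiples
    (K : Type*) [Field K] [NumberField K]
    (B : Set (Ideal (𝓞 K)))
    (hB : ∀ b ∈ B, b ≠ ⊥ ∧ b ≠ ⊤)
    (hprim : Primitive K B)
    (hD : Dset K B = ∅)
    (r : 𝓞 K) (a : Ideal (𝓞 K)) (ha : a ≠ ⊥)
    (h : ∀ t ∈ a, r + t ∈ MB K B) :
    ∃ b ∈ B, Ideal.span {r} ⊔ a ≤ b :=
  coset_in_multiples_general K B hB hD r a ha h

end BFree
end

section
/- Let B be a primitive collection of nonzero proper ideals of O_K with D = ∅, and let r, g ∈ O_K. If r + (g) ⊆ M_B, where (g) denotes the principal ideal generated by g, then there exists b ∈ B such that (r) + (g) ⊆ b. -/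
/-!
Suppose no `𝔟 ∈ B` contains `𝔞 = (r) + (g)`. Given a nonzero ideal `𝔮`, the Chinese remainder
theorem gives `x ∈ r + (g)` outside `𝔞𝔭` for every prime `𝔭 ⊇ 𝔮`, so that `(x) + (g)𝔭 = 𝔞`.
Some `𝔟 ∈ B` contains `x`; write `𝔟 = 𝔡𝔠` with `𝔡 = 𝔟 + (g) ⊇ 𝔞`. Then `𝔠 ≠ 𝒪` as `𝔞 ⊈ 𝔟`, and
`𝔠` is coprime to `𝔮`, since `𝔠 ⊆ 𝔭` would give `𝔞 ⊆ 𝔡𝔭` and hence `𝔡 ⊆ 𝔡𝔭`.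
Taking for `𝔮` the product of the cofactors found so far yields infinitely many pairwise coprime
`𝔠`; as `𝔡` ranges over the finitely many divisors of `𝔞`, one `𝔡` occurs infinitely often,
and it lies in `D`.
-/

open Set Filter Topology NumberField

open Ideal

namespace BFree

section DedekindDomain

variable {R : Type*} [CommRing R] [IsDedekindDomain R]

theorem finite_setOf_le {a : Ideal R} (ha : a ≠ ⊥) : {d : Ideal R | a ≤ d}.Finite := by
  have := UniqueFactorizationMonoid.fintypeSubtypeDvd a ha
  exact (finite_range ((↑) : {d // d ∣ a} → Ideal R)).subset
    fun d hd => ⟨⟨d, dvd_iff_le.mpr hd⟩, rfl⟩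

theorem eq_top_of_le_mul {a p : Ideal R} (ha : a ≠ ⊥) (h : a ≤ a * p) : p = ⊤ :=
  mul_left_cancel₀ ha (show a * p = a * ⊤ by rw [mul_top]; exact le_antisymm mul_le_left h)

theorem eq_or_eq_mul_of_mul_le_of_le {a I p : Ideal R} (hp : p.IsMaximal) (hpI : a * p ≤ I)
    (hIa : I ≤ a) : I = a ∨ I = a * p := by
  rcases eq_or_ne a ⊥ with rfl | ha
  · exact Or.inl (le_bot_iff.mp hIa)
  obtain ⟨J, rfl⟩ := dvd_iff_le.mpr hIa
  have hpJ : p ≤ J := le_of_dvd ((mul_dvd_mul_iff_left ha).mp (dvd_iff_le.mpr hpI))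
  rcases eq_or_ne J ⊤ with rfl | hJ
  · exact Or.inl (mul_top a)
  · exact Or.inr (by rw [hp.eq_of_le hJ hpJ])

theorem span_singleton_sup_mul_eq {x g : R} {p : Ideal R} (hp : p.IsMaximal)
    (hx : x ∉ (span {x} ⊔ span {g}) * p) :
    span {x} ⊔ span {g} * p = span {x} ⊔ span {g} := by
  refine (eq_or_eq_mul_of_mul_le_of_le hp ?_ (sup_le_sup_left mul_le_left _)).resolve_right
    fun h => hx (h ▸ mem_sup_left (mem_span_singleton_self x))
  rw [Ideal.sup_mul]
  exact sup_le_sup_right mul_le_left _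

theorem not_le_sup_span_singleton_mul {x g : R} {b p : Ideal R} (hp : p.IsMaximal)
    (hx : x ∉ (span {x} ⊔ span {g}) * p) (hxb : x ∈ b) :
    ¬ b ≤ (b ⊔ span {g}) * p := by
  intro hb
  have hg : span {g} ≤ (b ⊔ span {g}) * p := calc
    span {g} ≤ span {x} ⊔ span {g} := le_sup_right
    _ = span {x} ⊔ span {g} * p := (span_singleton_sup_mul_eq hp hx).symm
    _ ≤ (b ⊔ span {g}) * p :=
      sup_le ((span_singleton_le_iff_mem _).mpr (hb hxb)) (mul_mono_left le_sup_right)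
  have hd : b ⊔ span {g} ≠ ⊥ := by
    intro hd
    have hx0 : x = 0 := by simpa [hd] using hb hxb
    exact hx (hx0 ▸ zero_mem _)
  exact hp.ne_top (eq_top_of_le_mul hd (sup_le hb hg))

theorem exists_add_mul_notMem_mul {r g : R} {q : Ideal R} (hq : q ≠ ⊥)
    (ha : span {r} ⊔ span {g} ≠ ⊥) :
    ∃ s, ∀ p : Ideal R, p.IsMaximal → q ≤ p → r + g * s ∉ (span {r} ⊔ span {g}) * p := by
  set a := span {r} ⊔ span {g}
  let P := {p : Ideal R // p.IsMaximal ∧ q ≤ p}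
  have : Finite P := ((finite_setOf_le hq).subset fun _ hp => hp.2).to_subtype
  have hlocal : ∀ p : P, ∃ s, r + g * s ∉ a * p.1 := by
    rintro ⟨p, hp, -⟩
    by_contra! h
    have hr : r ∈ a * p := by simpa using h 0
    have hg : g ∈ a * p := by simpa using sub_mem (h 1) hr
    exact hp.ne_top (eq_top_of_le_mul ha
      (sup_le ((span_singleton_le_iff_mem _).mpr hr) ((span_singleton_le_iff_mem _).mpr hg)))
  choose s₀ hs₀ using hlocal
  have hcoprime : Pairwise fun p p' : P => IsCoprime p.1 p'.1 := fun p p' hne =>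
    isCoprime_iff_sup_eq.mpr (p.2.1.coprime_of_ne p'.2.1 (Subtype.coe_ne_coe.mpr hne))
  obtain ⟨s, hs⟩ := exists_forall_sub_mem_ideal hcoprime s₀
  refine ⟨s, fun p hp hqp hmem => hs₀ ⟨p, hp, hqp⟩ ?_⟩
  have hshift : g * (s - s₀ ⟨p, hp, hqp⟩) ∈ a * p :=
    mul_mono_left le_sup_right (mul_mem_mul (mem_span_singleton_self g) (hs ⟨p, hp, hqp⟩))
  rw [show r + g * s₀ ⟨p, hp, hqp⟩ = r + g * s - g * (s - s₀ ⟨p, hp, hqp⟩) by ring]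
  exact sub_mem hmem hshift

theorem exists_eq_mul_sup_eq_top {r g : R} {q : Ideal R} (hq : q ≠ ⊥)
    (ha : span {r} ⊔ span {g} ≠ ⊥) :
    ∃ s, ∀ b : Ideal R, r + g * s ∈ b →
      ∃ d c, span {r} ⊔ span {g} ≤ d ∧ b = d * c ∧ c ⊔ q = ⊤ := by
  obtain ⟨s, hs⟩ := exists_add_mul_notMem_mul hq ha
  refine ⟨s, fun b hb => ?_⟩
  have hspan : span {r + g * s} ⊔ span {g} = span {r} ⊔ span {g} := by
    rw [← span_insert, ← span_insert, mul_comm, span_pair_add_mul_right]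
  obtain ⟨c, hc⟩ := dvd_iff_le.mpr (le_sup_left : b ≤ b ⊔ span {g})
  refine ⟨b ⊔ span {g}, c, ?_, hc, ?_⟩
  · rw [← hspan]
    exact sup_le_sup_right ((span_singleton_le_iff_mem _).mpr hb) _
  · by_contra hne
    obtain ⟨p, hp, hcqp⟩ := exists_le_maximal _ hne
    exact not_le_sup_span_singleton_mul hp (hspan ▸ hs p hp (le_sup_right.trans hcqp)) hb
      (hc.le.trans (mul_mono_right (le_sup_left.trans hcqp)))

end DedekindDomain

theorem exists_infinite_pairwise_sup_eq_top {R : Type*} [CommRing R] [IsDomain R]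
    (P : Ideal R → Prop) (h : ∀ q : Ideal R, q ≠ ⊥ → ∃ c, c ≠ ⊥ ∧ c ≠ ⊤ ∧ c ⊔ q = ⊤ ∧ P c) :
    ∃ C : Set (Ideal R), C.Infinite ∧ C.Pairwise (fun c c' => c ⊔ c' = ⊤) ∧
      ∀ c ∈ C, c ≠ ⊥ ∧ c ≠ ⊤ ∧ P c := by
  choose f hf0 hftop hfq hfP using h
  -- `Q n` is the product of the first `n` ideals `c k` of the sequence.
  let Q : ℕ → {q : Ideal R // q ≠ ⊥} := fun n =>
    Nat.rec ⟨⊤, top_ne_bot⟩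
      (fun _ q => ⟨q.1 * f q.1 q.2, fun h => (mul_eq_bot.mp h).elim q.2 (hf0 _ _)⟩) n
  let c : ℕ → Ideal R := fun n => f (Q n).1 (Q n).2
  have hQ : ∀ k n, k < n → (Q n).1 ≤ c k := by
    intro k n hkn
    induction n with
    | zero => omega
    | succ n ih =>
      rcases Nat.lt_succ_iff_lt_or_eq.mp hkn with hlt | rfl
      · exact mul_le_left.trans (ih hlt)
      · exact mul_le_right
  have hlt : ∀ k n, k < n → c n ⊔ c k = ⊤ := fun k n hkn =>
    top_le_iff.mp ((hfq _ _).ge.trans (sup_le_sup_left (hQ k n hkn) _))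
  have hpair : Pairwise fun k n => c k ⊔ c n = ⊤ := fun k n hne =>
    hne.lt_or_gt.elim (fun h => (sup_comm (c n) (c k)).symm.trans (hlt k n h)) (hlt n k)
  have hinj : Function.Injective c := fun k n heq => by
    by_contra hne
    exact hftop _ _ (by simpa [heq] using hpair hne)
  refine ⟨range c, infinite_range_of_injective hinj, ?_, ?_⟩
  · rintro _ ⟨k, rfl⟩ _ ⟨n, rfl⟩ hne
    exact hpair fun h => hne (h ▸ rfl)
  · rintro _ ⟨n, rfl⟩
    exact ⟨hf0 _ _, hftop _ _, hfP _ _⟩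

theorem Dset_nonempty_of_forall_exists_coprime {K : Type*} [Field K] [NumberField K] {B : Set (Ideal (𝓞 K))}
    {a : Ideal (𝓞 K)} (ha : a ≠ ⊥)
    (h : ∀ q : Ideal (𝓞 K), q ≠ ⊥ →
      ∃ c, c ≠ ⊥ ∧ c ≠ ⊤ ∧ c ⊔ q = ⊤ ∧ ∃ d, a ≤ d ∧ d * c ∈ B) :
    (Dset K B).Nonempty := by
  obtain ⟨C, hCinf, hCpair, hC⟩ := exists_infinite_pairwise_sup_eq_top _ h
  choose! δ hδa hδB using fun c hc => (hC c hc).2.2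
  obtain ⟨d, had, hfiber⟩ : ∃ d ∈ {d | a ≤ d}, {c ∈ C | δ c = d}.Infinite := by
    by_contra! hfin
    exact hCinf (((finite_setOf_le ha).biUnion hfin).subset
      fun c hc => mem_biUnion (hδa c hc) ⟨hc, rfl⟩)
  refine ⟨d, fun hd => ha (le_bot_iff.mp (hd ▸ had)), _, hfiber,
    fun c hc => ⟨(hC c hc.1).1, (hC c hc.1).2.1⟩,
    fun c hc c' hc' hne => hCpair hc.1 hc'.1 hne, fun c hc => ?_⟩
  rw [← hc.2]
  exact hδB c hc.1

theorem coset_in_multiples_principal_general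
    (K : Type*) [Field K] [NumberField K]
    (B : Set (Ideal (𝓞 K)))
    (hB : ∀ b ∈ B, b ≠ ⊥ ∧ b ≠ ⊤)
    (hD : Dset K B = ∅)
    (r g : 𝓞 K)
    (h : ∀ t ∈ Ideal.span ({g} : Set (𝓞 K)), r + t ∈ MB K B) :
    ∃ b ∈ B, Ideal.span {r} ⊔ Ideal.span {g} ≤ b := by
  by_cases ha : span {r} ⊔ span {g} = ⊥
  · obtain ⟨b, hbB, -⟩ := h 0 (zero_mem _)
    exact ⟨b, hbB, ha ▸ bot_le⟩
  by_contra! hcon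
  refine not_nonempty_iff_eq_empty.mpr hD (Dset_nonempty_of_forall_exists_coprime ha fun q hq => ?_)
  obtain ⟨s, hs⟩ := exists_eq_mul_sup_eq_top hq ha
  obtain ⟨b, hbB, hb⟩ := h (g * s) (mul_mem_right s _ (mem_span_singleton_self g))
  obtain ⟨d, c, had, rfl, hcq⟩ := hs b hb
  refine ⟨c, ?_, ?_, hcq, d, had, hbB⟩
  · rintro rfl
    exact (hB _ hbB).1 (mul_bot d)
  · rintro rfl
    exact hcon _ hbB (by rwa [mul_top])

/-- **Theorem.** Principal ideal version: if `D = ∅` and `r + (g) ⊆ M_B`, then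
`(r) + (g) ⊆ 𝔟` for some `𝔟 ∈ B`. -/
theorem coset_in_multiples_principal
    (K : Type*) [Field K] [NumberField K]
    (B : Set (Ideal (𝓞 K)))
    (hB : ∀ b ∈ B, b ≠ ⊥ ∧ b ≠ ⊤)
    (hprim : Primitive K B)
    (hD : Dset K B = ∅)
    (r g : 𝓞 K)
    (h : ∀ t ∈ Ideal.span ({g} : Set (𝓞 K)), r + t ∈ MB K B) :
    ∃ b ∈ B, Ideal.span {r} ⊔ Ideal.span {g} ≤ b :=
  coset_in_multiples_principal_general K B hB hD r g h

end BFree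
end

section
/- Let r, g ∈ O_K, not both zero, and set 𝔞 = (r) + (g). Then there exist a sequence (x_i)_{i≥1} of elements of O_K and a sequence (c_i)_{i≥1} of nonzero ideals of O_K such that: (r + x_i g) = 𝔞 · c_i for every i ≥ 1; each c_i is coprime to 𝔞, i.e. c_i + 𝔞 = O_K; and c_i + c_j = O_K whenever i ≠ j. In particular, (r + x_i g) + (r + x_j g) = 𝔞 for all i ≠ j. -/
/-!
For a maximal ideal `p`, some `r + t g` lies outside `𝔞 p`: otherwise `r, g ∈ 𝔞 p`, so `𝔞 = 𝔞 p`
and `p = (1)` by cancellation of the nonzero ideal `𝔞`. The Chinese remainder theorem glues these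
`t` over the finitely many primes containing a nonzero ideal `b` into one `x` such that
`(r + x g) = 𝔞 c` with `c` coprime to `b`. Running this with `b = 𝔞 c₀ ⋯ cₙ₋₁` produces `cₙ`,
and then `(r + xᵢ g) + (r + xⱼ g) = 𝔞 (cᵢ + cⱼ) = 𝔞`.
-/

open NumberField

namespace Ideal

variable {R : Type*}

section CommSemiring

variable [CommSemiring R]

theorem sup_eq_top_of_forall_notMem_mul {I b c : Ideal R} {a : R} (ha : span {a} = I * c)
    (h : ∀ p : Ideal R, p.IsMaximal → b ≤ p → a ∉ I * p) : c ⊔ b = ⊤ := by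
  by_contra hne
  obtain ⟨p, hp, hcb⟩ := exists_le_maximal _ hne
  refine h p hp (le_sup_right.trans hcb) ?_
  rw [← span_singleton_le_iff_mem, ha]
  exact mul_mono_right (le_sup_left.trans hcb)

theorem exists_seq_pairwise_sup_eq_top [NoZeroDivisors R]
    (P : Ideal R → Prop) (step : ∀ b : Ideal R, b ≠ ⊥ → ∃ c, P c ∧ c ≠ ⊥ ∧ c ⊔ b = ⊤)
    {b₀ : Ideal R} (hb₀ : b₀ ≠ ⊥) :
    ∃ c : ℕ → Ideal R, (∀ i, P (c i) ∧ c i ≠ ⊥ ∧ c i ⊔ b₀ = ⊤) ∧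
      Pairwise fun i j ↦ c i ⊔ c j = ⊤ := by
  choose! f hfP hf_ne hf_sup using step
  -- `B n = b₀ * c 0 * ⋯ * c (n - 1)`, and `c n := f (B n)` is chosen coprime to it.
  let B : ℕ → Ideal R := fun n ↦ Nat.rec b₀ (fun _ b ↦ b * f b) n
  have hB_ne : ∀ n, B n ≠ ⊥ := by
    intro n
    induction n with
    | zero => exact hb₀
    | succ n ih => exact fun h ↦ (mul_eq_bot.mp h).elim ih (hf_ne _ ih)
  have hB_anti : Antitone B := antitone_nat_of_succ_le fun n ↦ mul_le_left
  have hc_sup : ∀ {i j}, B j ≤ i → f (B j) ⊔ i = ⊤ := fun {i j} hle ↦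
    top_le_iff.mp ((hf_sup _ (hB_ne j)).ge.trans (sup_le_sup_left hle _))
  refine ⟨fun n ↦ f (B n), fun n ↦ ⟨hfP _ (hB_ne n), hf_ne _ (hB_ne n),
    hc_sup (hB_anti n.zero_le)⟩, fun i j hij ↦ ?_⟩
  have hlt : ∀ {i j}, i < j → B j ≤ f (B i) := fun hlt ↦ (hB_anti hlt).trans mul_le_right
  rcases hij.lt_or_gt with h | h
  · simpa only [sup_comm] using hc_sup (hlt h)
  · exact hc_sup (hlt h)

end CommSemiring

variable [CommRing R] [IsDedekindDomain R]

theorem finite_setOf_isMaximal_le {b : Ideal R} (hb : b ≠ ⊥) :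
    {p : Ideal R | p.IsMaximal ∧ b ≤ p}.Finite := by
  classical
  refine (UniqueFactorizationMonoid.normalizedFactors b).toFinset.finite_toSet.subset ?_
  rintro p ⟨hp, hbp⟩
  simpa only [Finset.mem_coe, Multiset.mem_toFinset, mem_normalizedFactors_iff hb] using
    ⟨hp.isPrime, hbp⟩

theorem exists_add_mul_notMem_mul (r : R) {g : R} (hg : g ≠ 0) {p : Ideal R} (hp : p ≠ ⊤) :
    ∃ t : R, r + t * g ∉ (span {r} ⊔ span {g}) * p := by
  set 𝔞 := span {r} ⊔ span {g}
  by_contra! h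
  have hr : r ∈ 𝔞 * p := by simpa using h 0
  have hg' : g ∈ 𝔞 * p := by simpa using sub_mem (h 1) hr
  have h𝔞 : 𝔞 ≠ ⊥ := fun h𝔞 ↦ hg (by simpa [h𝔞] using hg')
  have : 𝔞 * p = 𝔞 := le_antisymm mul_le_left
    (sup_le ((span_singleton_le_iff_mem _).mpr hr) ((span_singleton_le_iff_mem _).mpr hg'))
  exact hp (by simpa using (mul_eq_left₀ h𝔞).mp this)

theorem exists_add_mul_ne_zero_forall_notMem_mul (r : R) {g : R} (hg : g ≠ 0) {b : Ideal R}
    (hb : b ≠ ⊥) : ∃ x : R, r + x * g ≠ 0 ∧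
      ∀ p : Ideal R, p.IsMaximal → b ≤ p → r + x * g ∉ (span {r} ⊔ span {g}) * p := by
  set 𝔞 := span {r} ⊔ span {g}
  let M := {p : Ideal R | p.IsMaximal ∧ b ≤ p}
  have : Finite M := (finite_setOf_isMaximal_le hb).to_subtype
  choose t ht using fun p : M ↦ exists_add_mul_notMem_mul r hg p.2.1.ne_top
  -- Any `y ≡ t p (mod p)` for all `p ∈ M` works, since `(y - t p) * g ∈ 𝔞 * p`.
  have hcongr : ∀ y, (∀ p : M, y - t p ∈ p.1) →
      ∀ p : Ideal R, p.IsMaximal → b ≤ p → r + y * g ∉ 𝔞 * p := by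
    intro y hy p hp hbp hmem
    have hdiff : (y - t ⟨p, hp, hbp⟩) * g ∈ 𝔞 * p :=
      mul_comm p 𝔞 ▸ mul_mem_mul (hy ⟨p, hp, hbp⟩) (mem_sup_right (mem_span_singleton_self g))
    exact ht ⟨p, hp, hbp⟩ (by convert sub_mem hmem hdiff using 1; ring)
  obtain ⟨x, hx⟩ := exists_forall_sub_mem_ideal (I := fun p : M ↦ p.1)
    (fun p q hpq ↦ isCoprime_iff_sup_eq.mpr
      (p.2.1.coprime_of_ne q.2.1 (Subtype.coe_injective.ne hpq))) t
  obtain ⟨n, hn, hn0⟩ := Submodule.exists_mem_ne_zero_of_ne_bot hb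
  by_cases h0 : r + x * g = 0
  · refine ⟨x + n, fun h ↦ hn0 ?_, hcongr _ fun p ↦ ?_⟩
    · exact (mul_eq_zero.mp (by linear_combination h - h0 : n * g = 0)).resolve_right hg
    · simpa [add_sub_right_comm] using add_mem (hx p) (p.2.2 hn)
  · exact ⟨x, h0, hcongr x hx⟩

theorem exists_span_add_mul_eq_mul_sup_eq_top (r : R) {g : R} (hg : g ≠ 0) {b : Ideal R}
    (hb : b ≠ ⊥) : ∃ (x : R) (c : Ideal R),
      span {r + x * g} = (span {r} ⊔ span {g}) * c ∧ c ≠ ⊥ ∧ c ⊔ b = ⊤ := by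
  obtain ⟨x, hx0, hx⟩ := exists_add_mul_ne_zero_forall_notMem_mul r hg hb
  have hmem : r + x * g ∈ span {r} ⊔ span {g} :=
    add_mem (mem_sup_left (mem_span_singleton_self r))
      (mul_mem_left _ x (mem_sup_right (mem_span_singleton_self g)))
  obtain ⟨c, hc⟩ := dvd_iff_le.mpr ((span_singleton_le_iff_mem _).mpr hmem)
  refine ⟨x, c, hc, ?_, sup_eq_top_of_forall_notMem_mul hc hx⟩
  rintro rfl
  exact hx0 (by simpa using hc)

end Ideal

theorem exists_coprime_combinations_general
    (K : Type*) [Field K] [NumberField K]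
    (r g : 𝓞 K) :
    ∃ (x : ℕ → 𝓞 K) (c : ℕ → Ideal (𝓞 K)),
      (∀ i, Ideal.span {r + x i * g} = (Ideal.span {r} ⊔ Ideal.span {g}) * c i) ∧
      (∀ i, c i ≠ ⊥) ∧
      (∀ i, c i ⊔ (Ideal.span {r} ⊔ Ideal.span {g}) = ⊤) ∧
      (∀ i j, i ≠ j → c i ⊔ c j = ⊤) ∧
      (∀ i j, i ≠ j →
        Ideal.span {r + x i * g} ⊔ Ideal.span {r + x j * g}
          = Ideal.span {r} ⊔ Ideal.span ({g} : Set (𝓞 K))) := by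
  by_cases hg : g = 0
  · subst hg
    exact ⟨0, fun _ ↦ ⊤, by simp, by simp, by simp, by simp, by simp⟩
  have h𝔞 : Ideal.span {r} ⊔ Ideal.span {g} ≠ ⊥ :=
    ne_bot_of_le_ne_bot (Ideal.span_singleton_eq_bot.not.mpr hg) le_sup_right
  obtain ⟨c, hc, hc_pair⟩ := Ideal.exists_seq_pairwise_sup_eq_top
    (fun c ↦ ∃ x, Ideal.span {r + x * g} = (Ideal.span {r} ⊔ Ideal.span {g}) * c)
    (fun b hb ↦ let ⟨x, c, hx, hc⟩ := Ideal.exists_span_add_mul_eq_mul_sup_eq_top r hg hb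
      ⟨c, ⟨x, hx⟩, hc⟩) h𝔞
  choose x hx using fun i ↦ (hc i).1
  refine ⟨x, c, hx, fun i ↦ (hc i).2.1, fun i ↦ (hc i).2.2, fun _ _ h ↦ hc_pair h,
    fun i j hij ↦ ?_⟩
  rw [hx, hx, ← Ideal.mul_sup, hc_pair hij, Ideal.mul_top]

/-- **Lemma.** For `r, g ∈ 𝓞 K` not both zero, there are `x_i ∈ 𝓞 K` and nonzero ideals
`c_i`, pairwise coprime and coprime to `𝔞 = (r) + (g)`, with `(r + x_i g) = 𝔞 · c_i`;
in particular `(r + x_i g) + (r + x_j g) = 𝔞` for `i ≠ j`. -/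
theorem exists_coprime_combinations
    (K : Type*) [Field K] [NumberField K]
    (r g : 𝓞 K) (h : ¬ (r = 0 ∧ g = 0)) :
    ∃ (x : ℕ → 𝓞 K) (c : ℕ → Ideal (𝓞 K)),
      (∀ i, Ideal.span {r + x i * g} = (Ideal.span {r} ⊔ Ideal.span {g}) * c i) ∧
      (∀ i, c i ≠ ⊥) ∧
      (∀ i, c i ⊔ (Ideal.span {r} ⊔ Ideal.span {g}) = ⊤) ∧
      (∀ i j, i ≠ j → c i ⊔ c j = ⊤) ∧
      (∀ i j, i ≠ j →
        Ideal.span {r + x i * g} ⊔ Ideal.span {r + x j * g}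
          = Ideal.span {r} ⊔ Ideal.span ({g} : Set (𝓞 K))) :=
  exists_coprime_combinations_general K r g
end

section
/- Let t ≥ 1 and let r, g_1, …, g_t ∈ O_K, not all zero, and set 𝔞 = (r) + (g_1) + … + (g_t). Then there exist a sequence of tuples (x_{i,1}, …, x_{i,t}) ∈ O_K^t, i ≥ 1, and a sequence (c_i)_{i≥1} of nonzero ideals of O_K such that (r + x_{i,1} g_1 + … + x_{i,t} g_t) = 𝔞 · c_i for every i ≥ 1, each c_i is coprime to 𝔞 (c_i + 𝔞 = O_K), and c_i + c_j = O_K whenever i ≠ j. -/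
/-!
Write `𝔞 = (r) + 𝔤` with `𝔤 = (g₁, …, g_t)`. Given a nonzero ideal `𝔟`, for each of the finitely
many primes `𝔭 ⊇ 𝔟` some `s ∈ 𝔤` has `r + s ∉ 𝔞𝔭`, since `𝔞𝔭 ≠ 𝔞`; the Chinese remainder theorem
glues these into one `s` working for all such `𝔭` at once. Then `(r + s) = 𝔞 c` with `c` coprime
to `𝔟`. Taking `𝔟 = 𝔞 c₀ ⋯ c_{n-1}` at step `n` yields the sequence.
-/

open NumberField UniqueFactorizationMonoid

namespace Ideal

variable {R : Type*} [CommRing R]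

/-- With `u p ≡ 1 mod p` and `u q ≡ 0 mod p` for `q ≠ p`, the element `s = ∑ q, u q * σ q`
satisfies `s - σ p ∈ p 𝔤`. -/
theorem exists_mem_forall_add_notMem_mul {𝔞 𝔤 : Ideal R} (h𝔤 : 𝔤 ≤ 𝔞) (r : R)
    {S : Finset (Ideal R)} (hS : ∀ p ∈ S, p.IsMaximal)
    (hσ : ∀ p ∈ S, ∃ s ∈ 𝔤, r + s ∉ 𝔞 * p) :
    ∃ s ∈ 𝔤, ∀ p ∈ S, r + s ∉ 𝔞 * p := by
  classical
  choose! σ hσ𝔤 hσ using hσ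
  have hcop : Pairwise fun p q : S => IsCoprime (p : Ideal R) q := fun p q hpq =>
    have := hS p p.2
    have := hS q q.2
    isCoprime_of_isMaximal (Subtype.coe_injective.ne hpq)
  choose u hu using fun p : S =>
    exists_forall_sub_mem_ideal hcop fun q => if p = q then (1 : R) else 0
  refine ⟨∑ q : S, u q * σ q, sum_mem _ fun q _ => mul_mem_left _ _ (hσ𝔤 q q.2),
    fun p hp hmem => hσ p hp ?_⟩
  have hdiff : ∑ q : S, u q * σ q - σ p ∈ 𝔞 * p := by
    have : ∑ q : S, u q * σ q - σ p
        = ∑ q : S, (u q - if q = ⟨p, hp⟩ then 1 else 0) * σ q := by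
      simp [sub_mul, Finset.sum_sub_distrib, ite_mul]
    rw [this, mul_comm]
    exact sum_mem _ fun q _ => mul_mem_mul (hu q ⟨p, hp⟩) (h𝔤 (hσ𝔤 q q.2))
  convert sub_mem hmem hdiff using 1
  ring

variable [IsDedekindDomain R]

theorem exists_mem_add_notMem_mul {r : R} {𝔤 𝔭 : Ideal R} (h𝔞 : span {r} ⊔ 𝔤 ≠ ⊥)
    (h𝔭 : 𝔭 ≠ ⊤) : ∃ s ∈ 𝔤, r + s ∉ (span {r} ⊔ 𝔤) * 𝔭 := by
  by_contra! h
  have hr : r ∈ (span {r} ⊔ 𝔤) * 𝔭 := by simpa using h 0 (zero_mem _)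
  have h𝔤 : 𝔤 ≤ (span {r} ⊔ 𝔤) * 𝔭 := fun s hs => by simpa using sub_mem (h s hs) hr
  have hle : span {r} ⊔ 𝔤 ≤ (span {r} ⊔ 𝔤) * 𝔭 := sup_le ((span_singleton_le_iff_mem _).mpr hr) h𝔤
  have hdvd : 𝔭 ∣ 1 := (mul_dvd_mul_iff_left h𝔞).mp (by rwa [mul_one, dvd_iff_le])
  exact h𝔭 (isUnit_iff.mp (isUnit_of_dvd_one hdvd))

theorem exists_mem_span_add_eq_mul_of_ne_top {r : R} {𝔤 𝔟 : Ideal R}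
    (h𝔞 : span {r} ⊔ 𝔤 ≠ ⊥) (h𝔟 : 𝔟 ≠ ⊥) (h𝔟top : 𝔟 ≠ ⊤) :
    ∃ s ∈ 𝔤, ∃ c : Ideal R, span {r + s} = (span {r} ⊔ 𝔤) * c ∧ c ≠ ⊥ ∧ c ⊔ 𝔟 = ⊤ := by
  classical
  set S := (normalizedFactors 𝔟).toFinset
  have hS : ∀ p ∈ S, p.IsPrime ∧ 𝔟 ≤ p := fun p hp =>
    (mem_normalizedFactors_iff h𝔟).mp (Multiset.mem_toFinset.mp hp)
  have hmax : ∀ 𝔪 : Ideal R, 𝔪.IsMaximal → 𝔟 ≤ 𝔪 → 𝔪 ∈ S := fun 𝔪 h𝔪 hle =>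
    Multiset.mem_toFinset.mpr ((mem_normalizedFactors_iff h𝔟).mpr ⟨h𝔪.isPrime, hle⟩)
  obtain ⟨s, hs𝔤, hs⟩ := exists_mem_forall_add_notMem_mul le_sup_right r
    (fun p hp => (hS p hp).1.isMaximal fun hbot => h𝔟 (le_bot_iff.mp (hbot ▸ (hS p hp).2)))
    (fun p hp => exists_mem_add_notMem_mul h𝔞 (hS p hp).1.ne_top)
  obtain ⟨c, hc⟩ : span {r} ⊔ 𝔤 ∣ span {r + s} :=
    dvd_iff_le.mpr <| (span_singleton_le_iff_mem _).mpr <|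
      add_mem (mem_sup_left (mem_span_singleton_self r)) (mem_sup_right hs𝔤)
  have hc_le : ∀ 𝔪 ∈ S, ¬c ≤ 𝔪 := fun 𝔪 h𝔪 hle =>
    hs 𝔪 h𝔪 (mul_mono_right hle (hc ▸ mem_span_singleton_self _))
  refine ⟨s, hs𝔤, c, hc, fun hbot => ?_, ?_⟩
  · obtain ⟨𝔪, h𝔪, hle⟩ := exists_le_maximal 𝔟 h𝔟top
    exact hc_le 𝔪 (hmax 𝔪 h𝔪 hle) (hbot ▸ bot_le)
  · by_contra hne
    obtain ⟨𝔪, h𝔪, hle⟩ := exists_le_maximal _ hne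
    exact hc_le 𝔪 (hmax 𝔪 h𝔪 (le_sup_right.trans hle)) (le_sup_left.trans hle)

/-- Replacing `𝔟` by `𝔟 𝔭` for a nonzero maximal ideal `𝔭` makes it proper, which forces
`r + s ≠ 0`. -/
theorem exists_mem_span_add_eq_mul (hR : ¬IsField R) {r : R} {𝔤 𝔟 : Ideal R}
    (h𝔞 : span {r} ⊔ 𝔤 ≠ ⊥) (h𝔟 : 𝔟 ≠ ⊥) :
    ∃ s ∈ 𝔤, ∃ c : Ideal R, span {r + s} = (span {r} ⊔ 𝔤) * c ∧ c ≠ ⊥ ∧ c ⊔ 𝔟 = ⊤ := by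
  obtain ⟨𝔭, h𝔭⟩ := exists_maximal R
  have h𝔭bot : 𝔭 ≠ ⊥ := Ring.ne_bot_of_isMaximal_of_not_isField h𝔭 hR
  obtain ⟨s, hs𝔤, c, hc, hc_ne, hc_sup⟩ := exists_mem_span_add_eq_mul_of_ne_top h𝔞
    (mul_ne_zero h𝔟 h𝔭bot) (ne_top_of_le_ne_top h𝔭.ne_top mul_le_right)
  exact ⟨s, hs𝔤, c, hc, hc_ne, top_le_iff.mp (hc_sup ▸ sup_le_sup_left mul_le_left c)⟩

end Ideal

theorem exists_seq_pairwise_sup_eq_top {R : Type*} [CommRing R] [NoZeroDivisors R]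
    (Q : Ideal R → Prop) {𝔞 : Ideal R} (h𝔞 : 𝔞 ≠ ⊥)
    (hQ : ∀ 𝔟 : Ideal R, 𝔟 ≠ ⊥ → ∃ c, Q c ∧ c ≠ ⊥ ∧ c ⊔ 𝔟 = ⊤) :
    ∃ c : ℕ → Ideal R, (∀ i, Q (c i)) ∧ (∀ i, c i ≠ ⊥) ∧ (∀ i, c i ⊔ 𝔞 = ⊤) ∧
      Pairwise fun i j => c i ⊔ c j = ⊤ := by
  choose! next hQ_next hnext_ne hnext_sup using hQ
  let A : ℕ → Ideal R := fun n => Nat.rec 𝔞 (fun _ 𝔟 => 𝔟 * next 𝔟) n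
  have hA_succ : ∀ n, A (n + 1) = A n * next (A n) := fun _ => rfl
  have hA_ne : ∀ n, A n ≠ ⊥ := by
    intro n
    induction n with
    | zero => exact h𝔞
    | succ n ih => rw [hA_succ]; exact mul_ne_zero ih (hnext_ne _ ih)
  have hA_anti : Antitone A := antitone_nat_of_succ_le fun n => by
    rw [hA_succ]; exact Ideal.mul_le_left
  have hcop : ∀ {i 𝔟}, A i ≤ 𝔟 → next (A i) ⊔ 𝔟 = ⊤ := fun hle =>
    top_le_iff.mp (hnext_sup _ (hA_ne _) ▸ sup_le_sup_left hle _)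
  refine ⟨fun n => next (A n), fun n => hQ_next _ (hA_ne n), fun n => hnext_ne _ (hA_ne n),
    fun n => hcop (hA_anti n.zero_le), ?_⟩
  have hlt : ∀ {i j}, i < j → next (A j) ⊔ next (A i) = ⊤ := fun hij =>
    hcop ((hA_anti hij).trans ((hA_succ _).trans_le Ideal.mul_le_right))
  intro i j hij
  rcases hij.lt_or_gt with h | h
  · rw [sup_comm]; exact hlt h
  · exact hlt h

theorem exists_coprime_combinations_multi_general
    (K : Type*) [Field K] [NumberField K]
    (t : ℕ)
    (r : 𝓞 K) (g : Fin t → 𝓞 K)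
    (h : ¬ (r = 0 ∧ ∀ k, g k = 0)) :
    ∃ (x : ℕ → Fin t → 𝓞 K) (c : ℕ → Ideal (𝓞 K)),
      (∀ i, Ideal.span {r + ∑ k, x i k * g k}
          = (Ideal.span {r} ⊔ ⨆ k, Ideal.span {g k}) * c i) ∧
      (∀ i, c i ≠ ⊥) ∧
      (∀ i, c i ⊔ (Ideal.span {r} ⊔ ⨆ k, Ideal.span {g k}) = ⊤) ∧
      (∀ i j, i ≠ j → c i ⊔ c j = ⊤) := by
  set 𝔤 : Ideal (𝓞 K) := ⨆ k, Ideal.span {g k}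
  have h𝔤 : 𝔤 = Ideal.span (Set.range g) := (Submodule.span_range_eq_iSup).symm
  have h𝔞 : Ideal.span {r} ⊔ 𝔤 ≠ ⊥ := by
    simpa [𝔤, sup_eq_bot_iff, iSup_eq_bot, Ideal.span_singleton_eq_bot] using h
  obtain ⟨c, hQ, hc_ne, hc_𝔞, hc_pairwise⟩ := exists_seq_pairwise_sup_eq_top
    (fun c => ∃ x : Fin t → 𝓞 K, Ideal.span {r + ∑ k, x k * g k} = (Ideal.span {r} ⊔ 𝔤) * c)
    h𝔞 fun 𝔟 h𝔟 => by
      obtain ⟨s, hs, c, hc, hc_ne, hc_sup⟩ :=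
        Ideal.exists_mem_span_add_eq_mul (RingOfIntegers.not_isField K) h𝔞 h𝔟
      obtain ⟨x, rfl⟩ := Ideal.mem_span_range_iff_exists_fun.mp (h𝔤 ▸ hs)
      exact ⟨c, ⟨x, hc⟩, hc_ne, hc_sup⟩
  choose x hx using hQ
  exact ⟨x, c, hx, hc_ne, hc_𝔞, fun i j => @hc_pairwise i j⟩

/-- **Lemma.** For `r, g₁, …, g_t ∈ 𝓞 K` not all zero, there are tuples
`(x_{i,1}, …, x_{i,t}) ∈ (𝓞 K)^t` and nonzero ideals `c_i`, pairwise coprime and coprime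
to `𝔞 = (r) + (g₁) + … + (g_t)`, with `(r + Σ_k x_{i,k} g_k) = 𝔞 · c_i`. -/
theorem exists_coprime_combinations_multi
    (K : Type*) [Field K] [NumberField K]
    (t : ℕ) (ht : 1 ≤ t)
    (r : 𝓞 K) (g : Fin t → 𝓞 K)
    (h : ¬ (r = 0 ∧ ∀ k, g k = 0)) :
    ∃ (x : ℕ → Fin t → 𝓞 K) (c : ℕ → Ideal (𝓞 K)),
      (∀ i, Ideal.span {r + ∑ k, x i k * g k}
          = (Ideal.span {r} ⊔ ⨆ k, Ideal.span {g k}) * c i) ∧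
      (∀ i, c i ≠ ⊥) ∧
      (∀ i, c i ⊔ (Ideal.span {r} ⊔ ⨆ k, Ideal.span {g k}) = ⊤) ∧
      (∀ i j, i ≠ j → c i ⊔ c j = ⊤) :=
  exists_coprime_combinations_multi_general K t r g h
end

section
/- Let A be a nonempty finite alphabet, x ∈ A^ℤ, and let s, q ≥ 1 be positive integers. The following are equivalent: (a) Per(x, s, a) = Per(x, s, a) − q for all a ∈ A; (b) Per(x, s, a) = Per(x, s, a) − kq for all a ∈ A and all k ∈ ℤ; (c) Per(x, s, a) = Per(x, gcd(s,q), a) for all a ∈ A; (d) Per(x, s, a) ⊆ Per(x, q, a) for all a ∈ A; (e) Per(x, s) ⊆ Per(x, q). -/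
/-- `Per(x, s, a) = {n ∈ ℤ : x(n + ks) = a for all k ∈ ℤ}`. -/
def PerSym {A : Type*} (x : ℤ → A) (s : ℕ) (a : A) : Set ℤ :=
  {n : ℤ | ∀ k : ℤ, x (n + k * s) = a}

/-- `Per(x, s) = {n ∈ ℤ : x(n + ks) = x(n) for all k ∈ ℤ}`. -/
def PerAll {A : Type*} (x : ℤ → A) (s : ℕ) : Set ℤ :=
  {n : ℤ | ∀ k : ℤ, x (n + k * s) = x n}

/-!
Everything is governed by the stabilizer of `P = Per(x, s, a)` under translation, an additive
subgroup of `ℤ`. It always contains `s`, and it contains `q` exactly when `P ⊆ Per(x, q, a)`.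
Conditions (a) and (b) say that `q` lies in it; then so does `gcd(s, q)`, which gives (c).
Finally `Per(x, s)` is the union of the sets `Per(x, s, a)`, and `Per(x, s, a)` is its part where
`x = a`, which turns (d) into (e) and back.
-/

open Pointwise AddAction

lemma AddSubgroup.gcd_mem {H : AddSubgroup ℤ} {a b : ℤ} (ha : a ∈ H) (hb : b ∈ H) :
    (a.gcd b : ℤ) ∈ H := by
  have : AddSubgroup.zmultiples (a.gcd b : ℤ) ≤ H := by
    rw [← Int.zmultiples_sup]
    exact sup_le (AddSubgroup.zmultiples_le.2 ha) (AddSubgroup.zmultiples_le.2 hb)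
  exact this (AddSubgroup.mem_zmultiples _)

lemma Set.image_sub_eq_self_iff {P : Set ℤ} {c : ℤ} :
    P = (fun n => n - c) '' P ↔ c ∈ stabilizer ℤ P := by
  have : (fun n => n - c) '' P = -c +ᵥ P := by
    simp only [sub_eq_neg_add]
    rfl
  rw [this, eq_comm, ← mem_stabilizer_iff, neg_mem_iff]

section Periodicity

variable {A : Type*} (x : ℤ → A)

variable {x} in
lemma apply_eq_of_mem_perSym {s : ℕ} {a : A} {n : ℤ} (h : n ∈ PerSym x s a) : x n = a := by
  simpa using h 0

variable {x} in
lemma add_mul_mem_perSym {s : ℕ} {a : A} {n : ℤ} (h : n ∈ PerSym x s a) (j : ℤ) :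
    n + j * s ∈ PerSym x s a := fun k => by
  rw [add_assoc, ← add_mul]
  exact h (j + k)

lemma natCast_mem_stabilizer_perSym (s : ℕ) (a : A) : (s : ℤ) ∈ stabilizer ℤ (PerSym x s a) := by
  refine mem_stabilizer_set.2 fun n => ⟨fun hn => ?_, fun hn => ?_⟩
  · simpa [vadd_eq_add] using add_mul_mem_perSym hn (-1)
  · simpa [vadd_eq_add, add_comm] using add_mul_mem_perSym hn 1

lemma natCast_mem_stabilizer_perSym_iff {s q : ℕ} {a : A} :
    (q : ℤ) ∈ stabilizer ℤ (PerSym x s a) ↔ PerSym x s a ⊆ PerSym x q a := by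
  constructor
  · intro hq n hn k
    have hkq : k * q ∈ stabilizer ℤ (PerSym x s a) := by simpa using zsmul_mem hq k
    rw [add_comm]
    exact apply_eq_of_mem_perSym ((mem_stabilizer_set.1 hkq n).2 hn)
  · intro h
    refine mem_stabilizer_set.2 fun n => ⟨fun hn k => ?_, fun hn k => ?_⟩
    · convert h (add_mul_mem_perSym hn k) (-1) using 2
      simp only [vadd_eq_add]
      ring
    · convert h (add_mul_mem_perSym hn k) 1 using 2
      simp only [vadd_eq_add]
      ring

lemma perSym_subset_perSym_of_dvd {d t : ℕ} (hdt : d ∣ t) (a : A) :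
    PerSym x d a ⊆ PerSym x t a :=
  (natCast_mem_stabilizer_perSym_iff x).1 <|
    AddSubgroup.zmultiples_le.2 (natCast_mem_stabilizer_perSym x d a)
      (Int.mem_zmultiples_iff.2 (Int.natCast_dvd_natCast.2 hdt))

lemma perSym_eq_perAll_inter_preimage (s : ℕ) (a : A) :
    PerSym x s a = PerAll x s ∩ x ⁻¹' {a} := by
  ext n
  refine ⟨fun h => ⟨fun k => (h k).trans (apply_eq_of_mem_perSym h).symm,
    apply_eq_of_mem_perSym h⟩, ?_⟩
  rintro ⟨h, rfl⟩
  exact h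

lemma forall_perSym_subset_iff_perAll_subset {s q : ℕ} :
    (∀ a, PerSym x s a ⊆ PerSym x q a) ↔ PerAll x s ⊆ PerAll x q := by
  refine ⟨fun h n hn => h (x n) hn, fun h a => ?_⟩
  rw [perSym_eq_perAll_inter_preimage, perSym_eq_perAll_inter_preimage]
  exact Set.inter_subset_inter_left _ h

end Periodicity

theorem per_equiv_conditions_general
    {A : Type*} (x : ℤ → A) (s q : ℕ) :
    List.TFAE
      [ ∀ a : A, PerSym x s a = (fun n => n - (q : ℤ)) '' PerSym x s a,
        ∀ a : A, ∀ k : ℤ, PerSym x s a = (fun n => n - k * q) '' PerSym x s a,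
        ∀ a : A, PerSym x s a = PerSym x (Nat.gcd s q) a,
        ∀ a : A, PerSym x s a ⊆ PerSym x q a,
        PerAll x s ⊆ PerAll x q ] := by
  simp only [Set.image_sub_eq_self_iff]
  tfae_have 1 ↔ 4 := forall_congr' fun _ => natCast_mem_stabilizer_perSym_iff x
  tfae_have 1 → 2 := fun h a k =>
    AddSubgroup.zmultiples_le.2 (h a) (Int.mem_zmultiples_iff.2 (dvd_mul_left _ _))
  tfae_have 2 → 1 := fun h a => by simpa using h a 1
  tfae_have 1 → 3 := fun h a => subset_antisymm
    ((natCast_mem_stabilizer_perSym_iff x).1 <| by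
      simpa using AddSubgroup.gcd_mem (natCast_mem_stabilizer_perSym x s a) (h a))
    (perSym_subset_perSym_of_dvd x (Nat.gcd_dvd_left s q) a)
  tfae_have 3 → 4 := fun h a => h a ▸ perSym_subset_perSym_of_dvd x (Nat.gcd_dvd_right s q) a
  tfae_have 4 ↔ 5 := forall_perSym_subset_iff_perAll_subset x
  tfae_finish

/-- **Proposition.** Equivalent conditions relating periodicity data at scales `s` and `q`. -/
theorem per_equiv_conditions
    {A : Type*} [Fintype A] [Nonempty A]
    (x : ℤ → A) (s q : ℕ) (hs : 0 < s) (hq : 0 < q) :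
    List.TFAE
      [ ∀ a : A, PerSym x s a = (fun n => n - (q : ℤ)) '' PerSym x s a,
        ∀ a : A, ∀ k : ℤ, PerSym x s a = (fun n => n - k * q) '' PerSym x s a,
        ∀ a : A, PerSym x s a = PerSym x (Nat.gcd s q) a,
        ∀ a : A, PerSym x s a ⊆ PerSym x q a,
        PerAll x s ⊆ PerAll x q ] :=
  per_equiv_conditions_general x s q
end

section
/- Let G be an abelian group, A a nonempty finite alphabet, x ∈ A^G, g ∈ G, and let Γ ≤ G be a subgroup of finite index; let Γ' = ⟨Γ, g⟩ be the subgroup generated by Γ and g. The following are equivalent: (a) Per(x, Γ, a) = Per(x, Γ, a) − g for all a ∈ A; (b) Per(x, Γ, a) = Per(x, Γ, a) − γ' for all a ∈ A and all γ' ∈ Γ'; (c) Per(x, Γ, a) = Per(x, Γ', a) for all a ∈ A; (d) Per(x, Γ, a) ⊆ Per(x, Γ', a) for all a ∈ A; (e) Per(x, Γ) ⊆ Per(x, Γ'). -/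
/-! Condition (a) says that `g` lies in the stabilizer of every `Per(x, Γ, a)` under translation.
This stabilizer contains `Γ`, so it then contains `Γ' = ⟨Γ, g⟩`, i.e. each `Per(x, Γ, a)` is a
union of `Γ'`-cosets, which is (c). Conversely the sets `Per(x, Γ, a)` are disjoint for distinct
`a`, so (e) already gives (d), and (d) together with `Per(x, Γ', a) ⊆ Per(x, Γ, a)` gives (c),
which in turn gives (a) because `Per(x, Γ', a)` is invariant under `Γ' ∋ g`. -/

/-- `Per(x, Γ, a) = {h ∈ G : x(h + γ) = a for all γ ∈ Γ}`. -/
def PerGrp {G A : Type*} [AddCommGroup G] (x : G → A) (Γ : AddSubgroup G) (a : A) :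
    Set G :=
  {h : G | ∀ γ ∈ Γ, x (h + γ) = a}

open Pointwise

theorem AddAction.image_sub_eq_self_iff_mem_stabilizer {G : Type*} [AddCommGroup G] (S : Set G)
    (γ : G) : (fun p => p - γ) '' S = S ↔ γ ∈ AddAction.stabilizer G S := by
  have hsub : (fun p => p - γ) = fun p => -γ +ᵥ p := funext fun p => by
    rw [vadd_eq_add, sub_eq_neg_add]
  rw [hsub, Set.image_vadd, ← AddAction.mem_stabilizer_iff, neg_mem_iff]

namespace PerGrp

variable {G A : Type*} [AddCommGroup G] {x : G → A} {Γ Γ' : AddSubgroup G} {a : A} {h : G}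

theorem apply_eq (hh : h ∈ PerGrp x Γ a) : x h = a := by
  simpa using hh 0 Γ.zero_mem

theorem anti (hle : Γ ≤ Γ') : PerGrp x Γ' a ⊆ PerGrp x Γ a :=
  fun _ hh γ hγ => hh γ (hle hγ)

theorem add_mem_iff {γ : G} (hγ : γ ∈ Γ) : h + γ ∈ PerGrp x Γ a ↔ h ∈ PerGrp x Γ a := by
  constructor
  · intro hh δ hδ
    simpa [add_assoc] using hh (δ - γ) (Γ.sub_mem hδ hγ)
  · intro hh δ hδ
    simpa [add_assoc] using hh (γ + δ) (Γ.add_mem hγ hδ)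

theorem le_stabilizer : Γ ≤ AddAction.stabilizer G (PerGrp x Γ a) := fun γ hγ =>
  AddAction.mem_stabilizer_set.2 fun h => by rw [vadd_eq_add, add_comm, add_mem_iff hγ]

theorem subset_of_le_stabilizer (hΓ' : Γ' ≤ AddAction.stabilizer G (PerGrp x Γ a)) :
    PerGrp x Γ a ⊆ PerGrp x Γ' a := fun h hh γ' hγ' => by
  have hmem : γ' +ᵥ h ∈ PerGrp x Γ a := (AddAction.mem_stabilizer_set.1 (hΓ' hγ') h).2 hh
  rw [vadd_eq_add, add_comm] at hmem
  exact apply_eq hmem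

theorem subset_of_iUnion_subset (hsub : (⋃ b, PerGrp x Γ b) ⊆ ⋃ b, PerGrp x Γ' b) :
    PerGrp x Γ a ⊆ PerGrp x Γ' a := fun h hh => by
  obtain ⟨b, hb⟩ := Set.mem_iUnion.1 (hsub (Set.mem_iUnion.2 ⟨a, hh⟩))
  rwa [← apply_eq hh, apply_eq hb]

end PerGrp

theorem per_equiv_conditions_group_general
    {G : Type*} [AddCommGroup G] {A : Type*}
    (x : G → A) (g : G) (Γ : AddSubgroup G) :
    List.TFAE
      [ ∀ a : A, PerGrp x Γ a = (fun p => p - g) '' PerGrp x Γ a,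
        ∀ a : A, ∀ γ' ∈ Γ ⊔ AddSubgroup.closure {g},
          PerGrp x Γ a = (fun p => p - γ') '' PerGrp x Γ a,
        ∀ a : A, PerGrp x Γ a = PerGrp x (Γ ⊔ AddSubgroup.closure {g}) a,
        ∀ a : A, PerGrp x Γ a ⊆ PerGrp x (Γ ⊔ AddSubgroup.closure {g}) a,
        (⋃ a : A, PerGrp x Γ a) ⊆ ⋃ a : A, PerGrp x (Γ ⊔ AddSubgroup.closure {g}) a ] := by
  simp only [eq_comm (a := PerGrp x Γ _) (b := _ '' _),
    AddAction.image_sub_eq_self_iff_mem_stabilizer]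
  have hle : Γ ≤ Γ ⊔ AddSubgroup.closure {g} := le_sup_left
  tfae_have 1 → 2 := fun h1 a =>
    sup_le PerGrp.le_stabilizer ((AddSubgroup.closure_le _).2 (Set.singleton_subset_iff.2 (h1 a)))
  tfae_have 2 → 3 := fun h2 a =>
    (PerGrp.subset_of_le_stabilizer (h2 a)).antisymm (PerGrp.anti hle)
  tfae_have 3 → 4 := fun h3 a => (h3 a).le
  tfae_have 4 → 3 := fun h4 a => (h4 a).antisymm (PerGrp.anti hle)
  tfae_have 3 → 1 := fun h3 a => by
    rw [h3 a]
    exact PerGrp.le_stabilizer (AddSubgroup.mem_sup_right (AddSubgroup.mem_closure_singleton_self g))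
  tfae_have 4 → 5 := Set.iUnion_mono
  tfae_have 5 → 4 := fun h5 _ => PerGrp.subset_of_iUnion_subset h5
  tfae_finish

/-- **Proposition.** Equivalent conditions relating periodicity data at scales `Γ` and
`Γ' = ⟨Γ, g⟩`. -/
theorem per_equiv_conditions_group
    {G : Type*} [AddCommGroup G] {A : Type*} [Fintype A] [Nonempty A]
    (x : G → A) (g : G) (Γ : AddSubgroup G) (hΓ : Γ.index ≠ 0) :
    List.TFAE
      [ ∀ a : A, PerGrp x Γ a = (fun p => p - g) '' PerGrp x Γ a,
        ∀ a : A, ∀ γ' ∈ Γ ⊔ AddSubgroup.closure {g},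
          PerGrp x Γ a = (fun p => p - γ') '' PerGrp x Γ a,
        ∀ a : A, PerGrp x Γ a = PerGrp x (Γ ⊔ AddSubgroup.closure {g}) a,
        ∀ a : A, PerGrp x Γ a ⊆ PerGrp x (Γ ⊔ AddSubgroup.closure {g}) a,
        (⋃ a : A, PerGrp x Γ a) ⊆ ⋃ a : A, PerGrp x (Γ ⊔ AddSubgroup.closure {g}) a ] :=
  per_equiv_conditions_group_general x g Γ
end

section
/- Let B ⊆ {2,3,…} be primitive, and assume that η is a Toeplitz sequence. Let d ∈ ℕ and 1 ≤ r ≤ d. If r + dℤ ⊆ M_B, then there exists b ∈ B such that b divides gcd(r, d). -/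
namespace BFreeZ

/-- The set of multiples `M_B = ⋃_{b ∈ B} bℤ` of `B ⊆ ℕ`. -/
def MBZ (B : Set ℕ) : Set ℤ := {n : ℤ | ∃ b ∈ B, (b : ℤ) ∣ n}

open Classical in
/-- The indicator function `η` of the `B`-free integers. -/
noncomputable def etaZ (B : Set ℕ) : ℤ → Bool :=
  fun n => if n ∈ MBZ B then false else true

/-- `Per(x, s) = {n ∈ ℤ : x(n + ks) = x(n) for all k ∈ ℤ}`. -/
def PerZ {A : Type*} (x : ℤ → A) (s : ℕ) : Set ℤ :=
  {n : ℤ | ∀ k : ℤ, x (n + k * s) = x n}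

/-- `x` is a Toeplitz sequence. -/
def IsToeplitzZ {A : Type*} (x : ℤ → A) : Prop :=
  ∀ n : ℤ, ∃ s : ℕ, 0 < s ∧ n ∈ PerZ x s

/-- `B ⊆ ℕ` is primitive: no element divides another one. -/
def PrimitiveZ (B : Set ℕ) : Prop :=
  ∀ b ∈ B, ∀ b' ∈ B, b ≠ b' → ¬ b ∣ b'

/-- The set `D` of `d ∈ ℕ` such that `d·C ⊆ B` for some infinite pairwise coprime set `C`
of integers greater than `1`. -/
def DZ (B : Set ℕ) : Set ℕ :=
  {d : ℕ | 0 < d ∧ ∃ C : Set ℕ, C.Infinite ∧ (∀ c ∈ C, 1 < c) ∧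
    (∀ c ∈ C, ∀ c' ∈ C, c ≠ c' → Nat.Coprime c c') ∧ ∀ c ∈ C, d * c ∈ B}

end BFreeZ

/-!
Suppose no `b ∈ B` divides `g = gcd(r, d)`, i.e. `g` is `B`-free. Since `η` is Toeplitz, the
whole class `g + sℤ` is `B`-free for some period `s ≥ 1`. On the other hand, the progression
`r + dℤ` contains an `n` with `gcd(n, s) ∣ g`, and `n` is a multiple of some `b ∈ B`; then
`gcd(b, s) ∣ g`, so by Bézout `g + sℤ` meets `bℤ`, a contradiction.
-/

/-- `x` is a unit modulo `n`; lift it to a unit modulo `n * m`. -/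
theorem Nat.exists_isCoprime_add_mul {x n m : ℕ} (hx : x.Coprime n) (hm : m ≠ 0) :
    ∃ k : ℤ, IsCoprime ((x : ℤ) + n * k) m := by
  rcases eq_or_ne n 0 with rfl | hn
  · rw [Nat.coprime_zero_right] at hx
    exact ⟨0, by simpa [hx] using isCoprime_one_left⟩
  have : NeZero (n * m) := ⟨mul_ne_zero hn hm⟩
  obtain ⟨u, hu⟩ := ZMod.unitsMap_surjective (dvd_mul_right n m) (ZMod.unitOfCoprime x hx)
  set y := (u : ZMod (n * m)).val
  have hy : ((y : ℤ) : ZMod n) = ((x : ℤ) : ZMod n) := by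
    have := congrArg Units.val hu
    rw [ZMod.unitsMap_val, ZMod.coe_unitOfCoprime, ZMod.cast_eq_val] at this
    exact_mod_cast this
  obtain ⟨k, hk⟩ := (ZMod.intCast_eq_intCast_iff_dvd_sub _ _ n).mp hy.symm
  refine ⟨k, ?_⟩
  rw [← hk, add_sub_cancel]
  exact Nat.isCoprime_iff_coprime.mpr (ZMod.val_coe_unit_coprime u).coprime_mul_left_right

theorem Nat.exists_gcd_add_mul_dvd_gcd (r d : ℕ) {s : ℕ} (hs : s ≠ 0) :
    ∃ k : ℤ, Int.gcd ((r : ℤ) + d * k) s ∣ Nat.gcd r d := by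
  obtain ⟨r', d', hcop, hr, hd⟩ := Nat.exists_coprime r d
  set g := Nat.gcd r d
  obtain ⟨k, hk⟩ := Nat.exists_isCoprime_add_mul hcop hs
  refine ⟨k, Int.natCast_dvd_natCast.mp ?_⟩
  have hfactor : (r : ℤ) + d * k = (r' + d' * k) * g := by
    rw [hr, hd]; push_cast; ring
  rw [hfactor]
  refine IsCoprime.dvd_of_dvd_mul_left ?_ (Int.gcd_dvd_left _ _)
  exact (hk.of_isCoprime_of_dvd_right (Int.gcd_dvd_right _ _)).symm

namespace BFreeZ

theorem exists_add_mul_mem_MBZ {B : Set ℕ} {n g : ℤ} {s : ℕ} (hn : n ∈ MBZ B)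
    (hg : (Int.gcd n s : ℤ) ∣ g) : ∃ k : ℤ, g + k * s ∈ MBZ B := by
  obtain ⟨b, hb, hbn⟩ := hn
  have hbs : (Int.gcd b s : ℤ) ∣ g :=
    (Int.natCast_dvd_natCast.mpr (Int.gcd_dvd_gcd_of_dvd_left (s : ℤ) hbn)).trans hg
  obtain ⟨c, hc⟩ := hbs
  refine ⟨-(c * Int.gcdB b s), b, hb, Int.gcdA b s * c, ?_⟩
  rw [hc, Int.gcd_eq_gcd_ab]
  ring

theorem add_mul_notMem_MBZ_of_mem_PerZ {B : Set ℕ} {g : ℤ} {s : ℕ} (hg : g ∉ MBZ B)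
    (hper : g ∈ PerZ (etaZ B) s) (k : ℤ) : g + k * s ∉ MBZ B := by
  simpa [etaZ, hg] using hper k

theorem ap_in_multiples_toeplitz_general
    (B : Set ℕ)
    (htoe : IsToeplitzZ (etaZ B))
    (d r : ℕ)
    (h : ∀ k : ℤ, (r : ℤ) + d * k ∈ MBZ B) :
    ∃ b ∈ B, b ∣ Nat.gcd r d := by
  by_contra hfree
  have hg : ((Nat.gcd r d : ℕ) : ℤ) ∉ MBZ B := fun ⟨b, hb, hbg⟩ =>
    hfree ⟨b, hb, Int.natCast_dvd_natCast.mp hbg⟩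
  obtain ⟨s, hs, hper⟩ := htoe (Nat.gcd r d)
  obtain ⟨k, hk⟩ := Nat.exists_gcd_add_mul_dvd_gcd r d hs.ne'
  obtain ⟨k', hk'⟩ := exists_add_mul_mem_MBZ (h k) (Int.natCast_dvd_natCast.mpr hk)
  exact add_mul_notMem_MBZ_of_mem_PerZ hg hper k' hk'

/-- **Theorem.** If `η` is Toeplitz and `r + dℤ ⊆ M_B` (with `1 ≤ r ≤ d`), then some
`b ∈ B` divides `gcd(r, d)`. -/
theorem ap_in_multiples_toeplitz
    (B : Set ℕ) (hB2 : ∀ b ∈ B, 2 ≤ b) (hprim : PrimitiveZ B)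
    (htoe : IsToeplitzZ (etaZ B))
    (d r : ℕ) (hr1 : 1 ≤ r) (hrd : r ≤ d)
    (h : ∀ k : ℤ, (r : ℤ) + d * k ∈ MBZ B) :
    ∃ b ∈ B, b ∣ Nat.gcd r d :=
  ap_in_multiples_toeplitz_general B htoe d r h

end BFreeZ
end

section
/- For all positive integers d and r, there exists an infinite set C of pairwise coprime positive integers such that gcd(r, d)·c ∈ r + dℤ for every c ∈ C. -/
/-! Write `g = gcd(r, d)`, so that `r / g` and `d / g` are coprime. By Dirichlet's theorem there
are infinitely many primes `p ≡ r / g [MOD d / g]`; distinct primes are coprime, and multiplying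
the congruence by `g` gives `g * p ≡ r [MOD d]`. -/

namespace Nat

theorem infinite_setOf_prime_modEq {a q : ℕ} (hq : q ≠ 0) (h : a.Coprime q) :
    {p : ℕ | p.Prime ∧ p ≡ a [MOD q]}.Infinite := by
  have : NeZero q := ⟨hq⟩
  simpa only [← ZMod.natCast_eq_natCast_iff] using
    infinite_setOfPred_prime_and_eq_mod ((ZMod.isUnit_iff_coprime a q).mpr h)

theorem gcd_mul_modEq_of_modEq_div_gcd {c r d : ℕ} (h : c ≡ r / r.gcd d [MOD d / r.gcd d]) :
    r.gcd d * c ≡ r [MOD d] := by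
  simpa only [Nat.mul_div_cancel' (Nat.gcd_dvd_left r d),
    Nat.mul_div_cancel' (Nat.gcd_dvd_right r d)] using h.mul_left' (r.gcd d)

end Nat

theorem gcd_multiples_in_ap_general (d r : ℕ) (hd : 0 < d) :
    ∃ C : Set ℕ, C.Infinite ∧ (∀ c ∈ C, 0 < c) ∧
      (∀ c ∈ C, ∀ c' ∈ C, c ≠ c' → Nat.Coprime c c') ∧
      (∀ c ∈ C, ∃ k : ℤ, (Nat.gcd r d : ℤ) * c = (r : ℤ) + d * k) := by
  have hg : 0 < r.gcd d := Nat.gcd_pos_of_pos_right r hd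
  have hd' : d / r.gcd d ≠ 0 := (Nat.div_pos (Nat.gcd_le_right (m := r) hd) hg).ne'
  refine ⟨{p | p.Prime ∧ p ≡ r / r.gcd d [MOD d / r.gcd d]},
    Nat.infinite_setOf_prime_modEq hd' (Nat.coprime_div_gcd_div_gcd hg),
    fun c hc => hc.1.pos, fun c hc c' hc' hne => (Nat.coprime_primes hc.1 hc'.1).mpr hne, ?_⟩
  rintro c ⟨-, hc⟩
  have hgc := Int.natCast_modEq_iff.mpr (Nat.gcd_mul_modEq_of_modEq_div_gcd hc).symm
  obtain ⟨k, hk⟩ := Int.modEq_iff_add_fac.mp hgc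
  exact ⟨k, by exact_mod_cast hk⟩

/-- **Lemma.** For all positive integers `d, r` there is an infinite pairwise coprime set
`C` of positive integers with `gcd(r,d)·c ∈ r + dℤ` for every `c ∈ C`. -/
theorem gcd_multiples_in_ap (d r : ℕ) (hd : 0 < d) (hr : 0 < r) :
    ∃ C : Set ℕ, C.Infinite ∧ (∀ c ∈ C, 0 < c) ∧
      (∀ c ∈ C, ∀ c' ∈ C, c ≠ c' → Nat.Coprime c c') ∧
      (∀ c ∈ C, ∃ k : ℤ, (Nat.gcd r d : ℤ) * c = (r : ℤ) + d * k) :=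
  gcd_multiples_in_ap_general d r hd
end

section
/- Let B ⊆ ℕ be such that there exist no d ∈ ℕ and no infinite set C of pairwise coprime integers greater than 1 with dc ∈ B for all c ∈ C. If d ∈ ℕ and C is an infinite set of pairwise coprime integers greater than 1 with dc ∈ M_B for all c ∈ C, then d ∈ M_B. -/
/-!
Choose `b_c ∈ B` dividing `d c` and split `b_c = k_c m_c` with `k_c ∣ d`, `m_c ∣ c`. Since `d` has
finitely many divisors, `k_c = g` for infinitely many `c`. Unless some `m_c = 1` (so `b_c ∣ d`),
these `m_c` form an infinite pairwise coprime set of integers `> 1` with `g m_c ∈ B`.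
-/

theorem Set.Infinite.exists_infinite_fiber_of_mapsTo {α β : Type*} {s : Set α} {t : Set β}
    {f : α → β} (hs : s.Infinite) (hf : Set.MapsTo f s t) (ht : t.Finite) :
    ∃ y ∈ t, (s ∩ f ⁻¹' {y}).Infinite := by
  by_contra! h
  exact hs <| (ht.biUnion h).subset fun x hx => Set.mem_biUnion (hf hx) ⟨hx, rfl⟩

open Function

namespace Nat

section DvdSelf

variable {C : Set ℕ} {f : ℕ → ℕ}

theorem pairwise_coprime_on_of_dvd_self (hC : C.Pairwise Coprime) (hf : ∀ c ∈ C, f c ∣ c) :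
    C.Pairwise (Coprime on f) := fun _ hx _ hy hxy =>
  (hC hx hy hxy).coprime_dvd_left (hf _ hx) |>.coprime_dvd_right (hf _ hy)

theorem injOn_of_dvd_self_of_pairwise_coprime (hC : C.Pairwise Coprime)
    (hf : ∀ c ∈ C, f c ∣ c) (hf1 : ∀ c ∈ C, f c ≠ 1) : C.InjOn f := by
  intro x hx y hy hxy
  by_contra hne
  have hcop := pairwise_coprime_on_of_dvd_self hC hf hx hy hne
  rw [onFun, ← hxy, coprime_self] at hcop
  exact hf1 x hx hcop

end DvdSelf

end Nat

/-- **Lemma.** Suppose `B ⊆ ℕ` contains no scaled copy `d·C` of an infinite pairwise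
coprime set `C` of integers `> 1`. If `d·C ⊆ M_B` for some `d ∈ ℕ` and some infinite
pairwise coprime set `C` of integers `> 1`, then `d ∈ M_B`. -/
theorem scaled_coprime_in_multiples (B : Set ℕ)
    (hD : ¬ ∃ d : ℕ, 0 < d ∧ ∃ C : Set ℕ, C.Infinite ∧ (∀ c ∈ C, 1 < c) ∧
      (∀ c ∈ C, ∀ c' ∈ C, c ≠ c' → Nat.Coprime c c') ∧ ∀ c ∈ C, d * c ∈ B)
    (d : ℕ) (hd : 0 < d) (C : Set ℕ) (hCinf : C.Infinite) (hC1 : ∀ c ∈ C, 1 < c)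
    (hCcop : ∀ c ∈ C, ∀ c' ∈ C, c ≠ c' → Nat.Coprime c c')
    (hmul : ∀ c ∈ C, ∃ b ∈ B, b ∣ d * c) :
    ∃ b ∈ B, b ∣ d := by
  choose! b hbB hbdvd using hmul
  choose! k m hkd hmc hb using fun c hc => dvd_mul.mp (hbdvd c hc)
  obtain ⟨g, hg, hSinf⟩ := hCinf.exists_infinite_fiber_of_mapsTo
    (fun c hc => Nat.mem_divisors.mpr ⟨hkd c hc, hd.ne'⟩) d.divisors.finite_toSet
  set S := C ∩ k ⁻¹' {g}
  have hSC : S ⊆ C := Set.inter_subset_left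
  have hbS : ∀ c ∈ S, b c = g * m c := fun c hc => hc.2 ▸ hb c hc.1
  have hmS : ∀ c ∈ S, m c ∣ c := fun c hc => hmc c hc.1
  have hScop : S.Pairwise Nat.Coprime :=
    (show C.Pairwise Nat.Coprime from fun x hx y hy => hCcop x hx y hy).mono hSC
  by_contra! hno
  have hm1 : ∀ c ∈ S, 1 < m c := by
    intro c hc
    have hm_pos : 0 < m c := Nat.pos_of_dvd_of_pos (hmS c hc) (by linarith [hC1 c hc.1])
    have hm_ne_one : m c ≠ 1 := by
      intro h
      refine hno (b c) (hbB c hc.1) ?_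
      rw [hbS c hc, h, mul_one, ← hc.2]
      exact hkd c hc.1
    omega
  have hinj := Nat.injOn_of_dvd_self_of_pairwise_coprime hScop hmS fun c hc => (hm1 c hc).ne'
  refine hD ⟨g, Nat.pos_of_mem_divisors hg, m '' S, hSinf.image hinj, ?_, ?_, ?_⟩
  · rintro _ ⟨c, hc, rfl⟩
    exact hm1 c hc
  · exact fun x hx y hy => (Nat.pairwise_coprime_on_of_dvd_self hScop hmS).image hx hy
  · rintro _ ⟨c, hc, rfl⟩
    exact hbS c hc ▸ hbB c hc.1
end

section
/- Let B ⊆ {2,3,…} be primitive, let (S_i)_{i≥1} be a saturated filtration of B by finite nonempty subsets, and assume η is a Toeplitz sequence. Then (lcm(S_i))_{i≥1} is a periodic structure of η: lcm(S_i) divides lcm(S_{i+1}) for every i, ⋃_{i≥1} Per(η, lcm(S_i)) = ℤ, and each lcm(S_i) is an essential period of η, meaning that Per(η, lcm(S_i)) ≠ ∅ and for every s ≥ 1, Per(η, lcm(S_i)) ⊆ Per(η, s) implies lcm(S_i) ∣ s. -/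
namespace BFreeZ

/-!
For `n ∉ M_B` the progression `n + sℤ` avoids `M_B` iff no `b ∈ B` has `gcd(b, s) ∣ n`.
If a Toeplitz period `s` of such an `n` could not be replaced by any `lcm(Sᵢ)`, there would be
`bᵢ ∈ B` with `gcd(bᵢ, lcm Sᵢ) ∣ n` for every `i`. Infinitely many of them share the value
`g = gcd(bᵢ, s)`, and for two such indices `i < j` with `bᵢ ∣ lcm S_j` we get
`g ∣ gcd(b_j, lcm S_j) ∣ n`, contradicting the choice of `s`.
Essentiality comes from primitivity: if all multiples of `b ∈ Sᵢ` are `s`-periodic points, then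
`gcd(b, s) ≡ b·x (mod s)` lies in `M_B`, so it is a multiple of some `b' ∈ B`, and `b' ∣ b`
forces `b' = b`.
-/

open Filter

theorem exists_dvd_add_mul_iff_gcd_dvd (b s : ℕ) (n : ℤ) :
    (∃ k : ℤ, (b : ℤ) ∣ n + k * s) ↔ (Nat.gcd b s : ℤ) ∣ n := by
  constructor
  · rintro ⟨k, hk⟩
    have hb : (Nat.gcd b s : ℤ) ∣ b := Int.natCast_dvd_natCast.mpr (Nat.gcd_dvd_left b s)
    have hs : (Nat.gcd b s : ℤ) ∣ s := Int.natCast_dvd_natCast.mpr (Nat.gcd_dvd_right b s)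
    simpa using dvd_sub (hb.trans hk) (hs.mul_left k)
  · rintro ⟨w, rfl⟩
    refine ⟨-(Nat.gcdB b s * w), Nat.gcdA b s * w, ?_⟩
    rw [Nat.gcd_eq_gcd_ab]
    ring

theorem exists_forall_not_gcd_dvd {B : Set ℕ} {L : ℕ → ℕ}
    (hB : ∀ b ∈ B, ∀ᶠ j in atTop, b ∣ L j) {n : ℤ} {s : ℕ} (hs : 0 < s)
    (hns : ∀ b ∈ B, ¬ (Nat.gcd b s : ℤ) ∣ n) :
    ∃ i, ∀ b ∈ B, ¬ (Nat.gcd b (L i) : ℤ) ∣ n := by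
  by_contra! h
  choose b hbB hbn using h
  obtain ⟨g, -, hg⟩ : ∃ g ∈ s.divisors, ∃ᶠ i in atTop, Nat.gcd (b i) s = g := by
    by_contra! hfin
    have hev := (s.divisors.finite_toSet.eventually_all (l := atTop)).2 hfin
    obtain ⟨i, hi⟩ := hev.exists
    exact hi _ (Nat.mem_divisors.2 ⟨Nat.gcd_dvd_right _ _, hs.ne'⟩) rfl
  obtain ⟨i, rfl⟩ := hg.exists
  obtain ⟨j, hj, hgj⟩ := ((hB _ (hbB i)).and_frequently hg).exists
  have hdvd : Nat.gcd (b i) s ∣ Nat.gcd (b j) (L j) :=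
    Nat.dvd_gcd (hgj ▸ Nat.gcd_dvd_left _ _) ((Nat.gcd_dvd_left _ _).trans hj)
  exact hns _ (hbB i) ((Int.natCast_dvd_natCast.mpr hdvd).trans (hbn j))

section

variable {B : Set ℕ}

theorem etaZ_eq_etaZ_iff {m n : ℤ} : etaZ B m = etaZ B n ↔ (m ∈ MBZ B ↔ n ∈ MBZ B) := by
  unfold etaZ
  split_ifs <;> simp_all

theorem mem_PerZ_etaZ_iff {n : ℤ} {s : ℕ} :
    n ∈ PerZ (etaZ B) s ↔ ∀ k : ℤ, (n + k * s ∈ MBZ B ↔ n ∈ MBZ B) :=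
  forall_congr' fun _ => etaZ_eq_etaZ_iff

theorem mem_PerZ_etaZ_of_dvd {b s : ℕ} {n : ℤ} (hb : b ∈ B) (hbn : (b : ℤ) ∣ n) (hbs : b ∣ s) :
    n ∈ PerZ (etaZ B) s := by
  refine mem_PerZ_etaZ_iff.2 fun k => iff_of_true ⟨b, hb, ?_⟩ ⟨b, hb, hbn⟩
  exact dvd_add hbn ((Int.natCast_dvd_natCast.mpr hbs).mul_left k)

theorem mem_PerZ_etaZ_iff_of_notMem {n : ℤ} {s : ℕ} (hn : n ∉ MBZ B) :
    n ∈ PerZ (etaZ B) s ↔ ∀ b ∈ B, ¬ (Nat.gcd b s : ℤ) ∣ n := by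
  simp only [mem_PerZ_etaZ_iff, hn, iff_false]
  constructor
  · rintro h b hb hbn
    obtain ⟨k, hk⟩ := (exists_dvd_add_mul_iff_gcd_dvd b s n).2 hbn
    exact h k ⟨b, hb, hk⟩
  · rintro h k ⟨b, hb, hk⟩
    exact h b hb ((exists_dvd_add_mul_iff_gcd_dvd b s n).1 ⟨k, hk⟩)

theorem dvd_of_forall_dvd_mem_PerZ (hprim : PrimitiveZ B) {b s : ℕ} (hb : b ∈ B)
    (hper : ∀ z : ℤ, (b : ℤ) ∣ z → z ∈ PerZ (etaZ B) s) : b ∣ s := by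
  obtain ⟨k, hk⟩ := (exists_dvd_add_mul_iff_gcd_dvd b s (Nat.gcd b s)).2 dvd_rfl
  have hgcd : (Nat.gcd b s : ℤ) ∈ MBZ B := by
    have := mem_PerZ_etaZ_iff.1 (hper _ hk) (-k)
    rw [show (Nat.gcd b s : ℤ) + k * s + -k * s = Nat.gcd b s by ring] at this
    exact this.2 ⟨b, hb, hk⟩
  obtain ⟨b', hb', hb'g⟩ := hgcd
  rw [Int.natCast_dvd_natCast] at hb'g
  have hb'b : b' = b := by
    by_contra hne
    exact hprim b' hb' b hb hne (hb'g.trans (Nat.gcd_dvd_left b s))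
  exact hb'b ▸ hb'g.trans (Nat.gcd_dvd_right b s)

end

theorem periodic_structure_one_dim_general
    (B : Set ℕ) (hprim : PrimitiveZ B)
    (S : ℕ → Finset ℕ)
    (hne : ∀ i, (S i).Nonempty) (hsub : ∀ i, (S i : Set ℕ) ⊆ B)
    (hmono : ∀ i, S i ⊆ S (i + 1)) (hunion : (⋃ i, (S i : Set ℕ)) = B)
    (htoe : IsToeplitzZ (etaZ B)) :
    (∀ i, (S i).lcm id ∣ (S (i + 1)).lcm id) ∧
    (⋃ i, PerZ (etaZ B) ((S i).lcm id)) = Set.univ ∧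
    (∀ i, (PerZ (etaZ B) ((S i).lcm id)).Nonempty ∧
      ∀ s : ℕ, 0 < s → PerZ (etaZ B) ((S i).lcm id) ⊆ PerZ (etaZ B) s →
        (S i).lcm id ∣ s) := by
  have hS : Monotone S := monotone_nat_of_le_succ hmono
  have hB : ∀ b ∈ B, ∃ i, b ∈ S i := fun b hb => Set.mem_iUnion.1 (hunion ▸ hb)
  refine ⟨fun i => Finset.lcm_mono (hmono i), ?_, fun i => ⟨?_, fun s _ hper => ?_⟩⟩
  · refine Set.eq_univ_of_forall fun n => Set.mem_iUnion.2 ?_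
    by_cases hn : n ∈ MBZ B
    · obtain ⟨b, hb, hbn⟩ := hn
      obtain ⟨i, hi⟩ := hB b hb
      exact ⟨i, mem_PerZ_etaZ_of_dvd hb hbn (Finset.dvd_lcm hi)⟩
    · obtain ⟨s, hs, hper⟩ := htoe n
      simp only [mem_PerZ_etaZ_iff_of_notMem hn] at hper ⊢
      refine exists_forall_not_gcd_dvd (fun b hb => ?_) hs hper
      obtain ⟨i, hi⟩ := hB b hb
      exact eventually_atTop.2 ⟨i, fun j hj => Finset.dvd_lcm (hS hj hi)⟩
  · obtain ⟨b, hb⟩ := hne i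
    exact ⟨0, mem_PerZ_etaZ_of_dvd (hsub i hb) (dvd_zero _) (Finset.dvd_lcm hb)⟩
  · refine Finset.lcm_dvd fun b hb => dvd_of_forall_dvd_mem_PerZ hprim (hsub i hb) fun z hz => ?_
    exact hper (mem_PerZ_etaZ_of_dvd (hsub i hb) hz (Finset.dvd_lcm hb))

/-- **Theorem.** If `η` is a Toeplitz sequence, then `(lcm(Sᵢ))ᵢ` is a periodic structure
of `η`. -/
theorem periodic_structure_one_dim
    (B : Set ℕ) (hB2 : ∀ b ∈ B, 2 ≤ b) (hprim : PrimitiveZ B)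
    (S : ℕ → Finset ℕ)
    (hne : ∀ i, (S i).Nonempty) (hsub : ∀ i, (S i : Set ℕ) ⊆ B)
    (hmono : ∀ i, S i ⊆ S (i + 1)) (hunion : (⋃ i, (S i : Set ℕ)) = B)
    (hsat : ∀ i, {n : ℕ | ∃ b ∈ B, n = Nat.gcd b ((S i).lcm id)} ∩ B = (S i : Set ℕ))
    (htoe : IsToeplitzZ (etaZ B)) :
    (∀ i, (S i).lcm id ∣ (S (i + 1)).lcm id) ∧
    (⋃ i, PerZ (etaZ B) ((S i).lcm id)) = Set.univ ∧
    (∀ i, (PerZ (etaZ B) ((S i).lcm id)).Nonempty ∧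
      ∀ s : ℕ, 0 < s → PerZ (etaZ B) ((S i).lcm id) ⊆ PerZ (etaZ B) s →
        (S i).lcm id ∣ s) :=
  periodic_structure_one_dim_general B hprim S hne hsub hmono hunion htoe

end BFreeZ
end

section
/- Let G be a countably infinite abelian group acting on a compact metric space X by homeomorphisms (T_g)_{g∈G} (with T_g ∘ T_h = T_{g+h}), and let x₀ ∈ X be a point with dense orbit. The following are equivalent: (a) X has exactly one minimal subset; (b) there exists a nonempty closed invariant set M' ⊆ X such that for every x ∈ M' and every y ∈ X there is a sequence (g_n) in G with g_n → ∞ and T_{g_n} y → x; (c) there exists x_M ∈ X such that for every y ∈ X there is a sequence (g_n) in G with g_n → ∞ and T_{g_n} y → x_M; (d) there exists a nonempty closed invariant set M'' ⊆ X such that for every open U ⊆ X with U ∩ M'' ≠ ∅ the set {g ∈ G : T_g x₀ ∈ U} is syndetic; (e) there exists a sequence (U_n)_{n≥1} of nonempty open subsets of X with diam(U_n) → 0 such that {g ∈ G : T_g x₀ ∈ U_n} is syndetic for every n. -/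
open Filter Topology

/-- A set `M` is invariant under the action `T`. -/
def ActInvariant {G X : Type*} (T : G → X → X) (M : Set X) : Prop :=
  ∀ g : G, ∀ x ∈ M, T g x ∈ M

/-- A minimal subset: nonempty, closed, invariant, with no proper nonempty closed
invariant subset. -/
def ActMinimal {G X : Type*} [TopologicalSpace X] (T : G → X → X) (M : Set X) : Prop :=
  M.Nonempty ∧ IsClosed M ∧ ActInvariant T M ∧
    ∀ N ⊆ M, N.Nonempty → IsClosed N → ActInvariant T N → N = M

/-- `g n → ∞`: the sequence eventually leaves every finite subset of `G`. -/
def TendstoInftyGrp {G : Type*} (g : ℕ → G) : Prop :=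
  ∀ A : Set G, A.Finite → ∃ N : ℕ, ∀ n ≥ N, g n ∉ A

/-- `R ⊆ G` is syndetic: `R + F = G` for some finite `F ⊆ G`. -/
def SyndeticSet {G : Type*} [AddCommGroup G] (R : Set G) : Prop :=
  ∃ F : Set G, F.Finite ∧ ∀ g : G, ∃ r ∈ R, ∃ f ∈ F, g = r + f

/-!
The unique minimal set `M` of an essentially minimal system lies in the ω-limit set (along the
cofinite filter of `G`) and in the orbit closure of every point, since both are nonempty, closed
and invariant. The first fact gives (b) and (c); the second says that every orbit enters each open
`U` meeting `M`, which by compactness happens within a bounded set of return times, so the visits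
of `x₀` to `U` are syndetic. Conversely, a syndetic return set of `x₀` to `U` forces every
nonempty closed invariant set to meet `closure U`, so shrinking `U` makes any two minimal sets
meet, hence coincide.
-/

open Filter Topology Set omegaLimit

instance Filter.isCountablyGenerated_cofinite {α : Type*} [Countable α] :
    (cofinite : Filter α).IsCountablyGenerated :=
  HasCountableBasis.isCountablyGenerated ⟨hasBasis_cofinite, Set.Countable.ofPred_finite⟩

theorem tendstoInftyGrp_iff_tendsto_cofinite {G : Type*} {gs : ℕ → G} :
    TendstoInftyGrp gs ↔ Tendsto gs atTop cofinite := by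
  simp only [hasBasis_cofinite.tendsto_right_iff, eventually_atTop, TendstoInftyGrp]
  rfl

section Invariant

variable {G X : Type*} {T : G → X → X}

theorem ActInvariant.inter {M N : Set X} (hM : ActInvariant T M) (hN : ActInvariant T N) :
    ActInvariant T (M ∩ N) :=
  fun g x hx => ⟨hM g x hx.1, hN g x hx.2⟩

theorem ActInvariant.closure [TopologicalSpace X] (hcont : ∀ g, Continuous (T g)) {M : Set X}
    (hM : ActInvariant T M) : ActInvariant T (closure M) :=
  fun g _ hx => map_mem_closure (hcont g) hx fun y hy => hM g y hy

theorem actInvariant_range [Add G] (hcomp : ∀ g h : G, T g ∘ T h = T (g + h)) (y : X) :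
    ActInvariant T (range fun g => T g y) := by
  rintro h _ ⟨g, rfl⟩
  exact ⟨h + g, (congrFun (hcomp h g) y).symm⟩

theorem actInvariant_omegaLimit [TopologicalSpace X] [AddGroup G]
    (hcont : ∀ g, Continuous (T g)) (hcomp : ∀ g h : G, T g ∘ T h = T (g + h)) (y : X) :
    ActInvariant T (ω cofinite T {y}) := fun h _ hx =>
  omegaLimit_subset_of_tendsto T {y} (add_right_injective h).tendsto_cofinite <|
    mapsTo_omegaLimit (f := cofinite) _ (mapsTo_id _) (fun g y => congrFun (hcomp h g) y)
      (hcont h) hx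

end Invariant

section Minimal

variable {G X : Type*} [TopologicalSpace X] {T : G → X → X} {M N : Set X}

theorem ActMinimal.eq_of_inter_nonempty (hM : ActMinimal T M) (hN : ActMinimal T N)
    (h : (M ∩ N).Nonempty) : M = N := by
  have hcl := hM.2.1.inter hN.2.1
  have hinv := hM.2.2.1.inter hN.2.2.1
  rw [← hM.2.2.2 _ inter_subset_left h hcl hinv, hN.2.2.2 _ inter_subset_right h hcl hinv]

theorem exists_actMinimal_subset [CompactSpace X] {S : Set X} (hne : S.Nonempty)
    (hcl : IsClosed S) (hinv : ActInvariant T S) : ∃ M ⊆ S, ActMinimal T M := by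
  obtain ⟨M, hMS, ⟨hMne, hMcl, hMinv⟩, hMmin⟩ :=
    zorn_superset_nonempty {N : Set X | N.Nonempty ∧ IsClosed N ∧ ActInvariant T N}
      (fun c hc hchain hcne => by
        have : Nonempty c := hcne.to_subtype
        have hdir : IsChain (· ⊇ ·) c := hchain.symm
        refine ⟨⋂₀ c, ⟨?_, isClosed_sInter fun N hN => (hc hN).2.1, ?_⟩,
          fun N hN => sInter_subset_of_mem hN⟩
        · exact IsCompact.nonempty_sInter_of_directed_nonempty_isCompact_isClosed
            hdir.directedOn (fun N hN => (hc hN).1)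
            (fun N hN => (hc hN).2.1.isCompact) (fun N hN => (hc hN).2.1)
        · exact fun g x hx => mem_sInter.2 fun N hN => (hc hN).2.2 g x (mem_sInter.1 hx N hN))
      S ⟨hne, hcl, hinv⟩
  exact ⟨M, hMS, hMne, hMcl, hMinv,
    fun N hNM hNne hNcl hNinv => subset_antisymm hNM (hMmin ⟨hNne, hNcl, hNinv⟩ hNM)⟩

theorem subset_of_forall_actMinimal_eq [CompactSpace X] (huniq : ∀ N, ActMinimal T N → N = M)
    {S : Set X} (hne : S.Nonempty) (hcl : IsClosed S) (hinv : ActInvariant T S) : M ⊆ S := by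
  obtain ⟨N, hNS, hN⟩ := exists_actMinimal_subset hne hcl hinv
  exact huniq N hN ▸ hNS

theorem existsUnique_actMinimal [CompactSpace X] [Nonempty X]
    (h : ∀ M N, ActMinimal T M → ActMinimal T N → (M ∩ N).Nonempty) :
    ∃! M, ActMinimal T M := by
  obtain ⟨M, -, hM⟩ := exists_actMinimal_subset (T := T) univ_nonempty isClosed_univ
    fun _ _ _ => mem_univ _
  exact ⟨M, hM, fun N hN => hN.eq_of_inter_nonempty hM (h N M hN hM)⟩

end Minimal

section Syndetic

variable {G X : Type*} [AddCommGroup G] [TopologicalSpace X] {T : G → X → X}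

theorem syndeticSet_of_forall_exists_mem [CompactSpace X] (hcont : ∀ g, Continuous (T g))
    (hcomp : ∀ g h : G, T g ∘ T h = T (g + h)) {U : Set X} (hU : IsOpen U)
    (hvisit : ∀ y, ∃ g, T g y ∈ U) (x : X) : SyndeticSet {g | T g x ∈ U} := by
  obtain ⟨t, ht⟩ := isCompact_univ.elim_finite_subcover (fun h => T h ⁻¹' U)
    (fun h => hU.preimage (hcont h)) fun y _ => mem_iUnion.2 (hvisit y)
  refine ⟨Neg.neg '' ↑t, t.finite_toSet.image _, fun g => ?_⟩
  obtain ⟨h, hht, hhg⟩ := mem_iUnion₂.1 (ht (mem_univ (T g x)))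
  refine ⟨h + g, ?_, -h, mem_image_of_mem _ hht, by abel⟩
  rwa [mem_ofPred_eq, ← congrFun (hcomp h g) x]

theorem inter_closure_nonempty_of_syndeticSet (hcont : ∀ g, Continuous (T g))
    (hcomp : ∀ g h : G, T g ∘ T h = T (g + h)) {x₀ : X}
    (hx₀ : Dense (range fun g => T g x₀)) {K : Set X} (hK : K.Nonempty)
    (hKinv : ActInvariant T K) {U : Set X} (hU : SyndeticSet {g | T g x₀ ∈ U}) :
    (K ∩ closure U).Nonempty := by
  obtain ⟨F, hF, hFU⟩ := hU
  obtain ⟨y, hy⟩ := hK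
  have hcover : range (fun g => T g x₀) ⊆ ⋃ f ∈ F, T (-f) ⁻¹' closure U := by
    rintro _ ⟨g, rfl⟩
    obtain ⟨r, hr, f, hf, rfl⟩ := hFU g
    refine mem_biUnion hf (subset_closure ?_)
    show T (-f) (T (r + f) x₀) ∈ U
    rwa [← Function.comp_apply (f := T (-f)), hcomp, show -f + (r + f) = r by abel]
  have hclosed : IsClosed (⋃ f ∈ F, T (-f) ⁻¹' closure U) :=
    hF.isClosed_biUnion fun f _ => isClosed_closure.preimage (hcont _)
  obtain ⟨f, -, hf⟩ := mem_iUnion₂.1 (closure_minimal hcover hclosed (hx₀ y))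
  exact ⟨T (-f) y, hKinv _ _ hy, hf⟩

theorem inter_nonempty_of_syndeticSet_of_tendsto_diam {X : Type*} [MetricSpace X]
    [CompactSpace X] {T : G → X → X} (hcont : ∀ g, Continuous (T g))
    (hcomp : ∀ g h : G, T g ∘ T h = T (g + h)) {x₀ : X}
    (hx₀ : Dense (range fun g => T g x₀)) {K L : Set X} (hK : K.Nonempty) (hKcl : IsClosed K)
    (hKinv : ActInvariant T K) (hL : L.Nonempty) (hLcl : IsClosed L) (hLinv : ActInvariant T L)
    {U : ℕ → Set X} (hdiam : Tendsto (fun n => Metric.diam (U n)) atTop (𝓝 0))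
    (hU : ∀ n, SyndeticSet {g | T g x₀ ∈ U n}) : (K ∩ L).Nonempty := by
  obtain ⟨⟨a, b⟩, ⟨ha, hb⟩, hmin⟩ := (hKcl.isCompact.prod hLcl.isCompact).exists_isMinOn
    (hK.prod hL) continuous_dist.continuousOn
  have hle : ∀ n, dist a b ≤ Metric.diam (U n) := fun n => by
    obtain ⟨p, hpK, hpU⟩ :=
      inter_closure_nonempty_of_syndeticSet hcont hcomp hx₀ hK hKinv (hU n)
    obtain ⟨q, hqL, hqU⟩ :=
      inter_closure_nonempty_of_syndeticSet hcont hcomp hx₀ hL hLinv (hU n)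
    calc dist a b ≤ dist p q := isMinOn_iff.1 hmin (p, q) (mk_mem_prod hpK hqL)
      _ ≤ Metric.diam (closure (U n)) :=
        Metric.dist_le_diam_of_mem Metric.isBounded_of_compactSpace hpU hqU
      _ = Metric.diam (U n) := Metric.diam_closure _
  obtain rfl : a = b := dist_le_zero.1 (ge_of_tendsto' hdiam hle)
  exact ⟨a, ha, hb⟩

end Syndetic

section UniqueMinimal

variable {G X : Type*} [TopologicalSpace X] [CompactSpace X] {T : G → X → X} {M : Set X}

theorem exists_tendstoInftyGrp_tendsto_of_forall_actMinimal_eq [AddGroup G] [Countable G]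
    [Infinite G] [FirstCountableTopology X] (hcont : ∀ g, Continuous (T g))
    (hcomp : ∀ g h : G, T g ∘ T h = T (g + h)) (huniq : ∀ N, ActMinimal T N → N = M)
    {x : X} (hx : x ∈ M) (y : X) :
    ∃ gs : ℕ → G, TendstoInftyGrp gs ∧ Tendsto (fun n => T (gs n) y) atTop (𝓝 x) := by
  have hxω : x ∈ ω cofinite T {y} := subset_of_forall_actMinimal_eq huniq
    (nonempty_omegaLimit _ _ _ (singleton_nonempty y)) (isClosed_omegaLimit _ _ _)
    (actInvariant_omegaLimit hcont hcomp y) hx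
  obtain ⟨gs, hconv, hgs⟩ :=
    ((mem_omegaLimit_singleton_iff_mapClusterPt _ _ y x).1 hxω).exists_seq_tendsto
  exact ⟨gs, tendstoInftyGrp_iff_tendsto_cofinite.2 hgs, hconv⟩

theorem exists_mem_of_forall_actMinimal_eq [AddGroup G] (hcont : ∀ g, Continuous (T g))
    (hcomp : ∀ g h : G, T g ∘ T h = T (g + h)) (huniq : ∀ N, ActMinimal T N → N = M)
    {U : Set X} (hU : IsOpen U) (hUM : (U ∩ M).Nonempty) (y : X) : ∃ g, T g y ∈ U := by
  obtain ⟨u, huU, huM⟩ := hUM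
  have hu : u ∈ closure (range fun g => T g y) := subset_of_forall_actMinimal_eq huniq
    (range_nonempty _).closure isClosed_closure ((actInvariant_range hcomp y).closure hcont) huM
  obtain ⟨_, hgU, g, rfl⟩ := mem_closure_iff.1 hu U hU huU
  exact ⟨g, hgU⟩

end UniqueMinimal

theorem essentially_minimal_tfae_general
    {G : Type*} [AddCommGroup G] [Countable G] [Infinite G]
    {X : Type*} [MetricSpace X] [CompactSpace X]
    (T : G → X → X)
    (hcont : ∀ g : G, Continuous (T g))
    (hcomp : ∀ g h : G, T g ∘ T h = T (g + h))
    (x₀ : X) (hx₀ : Dense (Set.range fun g : G => T g x₀)) :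
    List.TFAE
      [ ∃! M : Set X, ActMinimal T M,
        ∃ M' : Set X, M'.Nonempty ∧ IsClosed M' ∧ ActInvariant T M' ∧
          ∀ x ∈ M', ∀ y : X, ∃ gs : ℕ → G, TendstoInftyGrp gs ∧
            Tendsto (fun n => T (gs n) y) atTop (𝓝 x),
        ∃ xM : X, ∀ y : X, ∃ gs : ℕ → G, TendstoInftyGrp gs ∧
          Tendsto (fun n => T (gs n) y) atTop (𝓝 xM),
        ∃ M'' : Set X, M''.Nonempty ∧ IsClosed M'' ∧ ActInvariant T M'' ∧
          ∀ U : Set X, IsOpen U → (U ∩ M'').Nonempty →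
            SyndeticSet {g : G | T g x₀ ∈ U},
        ∃ U : ℕ → Set X, (∀ n, IsOpen (U n)) ∧ (∀ n, (U n).Nonempty) ∧
          Tendsto (fun n => Metric.diam (U n)) atTop (𝓝 0) ∧
          ∀ n, SyndeticSet {g : G | T g x₀ ∈ U n} ] := by
  have : Nonempty X := ⟨x₀⟩
  tfae_have 1 → 2 := by
    rintro ⟨M, hM, huniq⟩
    exact ⟨M, hM.1, hM.2.1, hM.2.2.1, fun x hx y =>
      exists_tendstoInftyGrp_tendsto_of_forall_actMinimal_eq hcont hcomp huniq hx y⟩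
  tfae_have 2 → 3 := by
    rintro ⟨_, ⟨x, hx⟩, -, -, hlim⟩
    exact ⟨x, hlim x hx⟩
  tfae_have 3 → 1 := by
    rintro ⟨xM, hxM⟩
    have hmem : ∀ M, ActMinimal T M → xM ∈ M := fun M ⟨⟨y, hy⟩, hcl, hinv, _⟩ =>
      let ⟨_, _, hlim⟩ := hxM y
      hcl.mem_of_tendsto hlim (Eventually.of_forall fun _ => hinv _ _ hy)
    exact existsUnique_actMinimal fun M N hM hN => ⟨xM, hmem M hM, hmem N hN⟩
  tfae_have 1 → 4 := by
    rintro ⟨M, hM, huniq⟩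
    exact ⟨M, hM.1, hM.2.1, hM.2.2.1, fun U hU hUM => syndeticSet_of_forall_exists_mem hcont
      hcomp hU (exists_mem_of_forall_actMinimal_eq hcont hcomp huniq hU hUM) x₀⟩
  tfae_have 4 → 5 := by
    rintro ⟨M, ⟨x, hx⟩, -, -, hsyn⟩
    refine ⟨fun n => Metric.ball x (1 / (n + 1)), fun n => Metric.isOpen_ball,
      fun n => ⟨x, Metric.mem_ball_self (by positivity)⟩, ?_,
      fun n => hsyn _ Metric.isOpen_ball ⟨x, Metric.mem_ball_self (by positivity), hx⟩⟩
    refine squeeze_zero (fun n => Metric.diam_nonneg) (fun n => Metric.diam_ball (by positivity)) ?_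
    simpa using tendsto_one_div_add_atTop_nhds_zero_nat.const_mul (2 : ℝ)
  tfae_have 5 → 1 := fun ⟨_, _, _, hdiam, hsyn⟩ =>
    existsUnique_actMinimal fun M N hM hN =>
      inter_nonempty_of_syndeticSet_of_tendsto_diam hcont hcomp hx₀ hM.1 hM.2.1 hM.2.2.1
        hN.1 hN.2.1 hN.2.2.1 hdiam hsyn
  tfae_finish

/-- **Proposition.** Characterizations of essential minimality for an action of a
countably infinite abelian group on a compact metric space with a transitive point. -/
theorem essentially_minimal_tfae
    {G : Type*} [AddCommGroup G] [Countable G] [Infinite G]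
    {X : Type*} [MetricSpace X] [CompactSpace X]
    (T : G → X → X)
    (hcont : ∀ g : G, Continuous (T g))
    (hbij : ∀ g : G, Function.Bijective (T g))
    (hcomp : ∀ g h : G, T g ∘ T h = T (g + h))
    (x₀ : X) (hx₀ : Dense (Set.range fun g : G => T g x₀)) :
    List.TFAE
      [ ∃! M : Set X, ActMinimal T M,
        ∃ M' : Set X, M'.Nonempty ∧ IsClosed M' ∧ ActInvariant T M' ∧
          ∀ x ∈ M', ∀ y : X, ∃ gs : ℕ → G, TendstoInftyGrp gs ∧
            Tendsto (fun n => T (gs n) y) atTop (𝓝 x),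
        ∃ xM : X, ∀ y : X, ∃ gs : ℕ → G, TendstoInftyGrp gs ∧
          Tendsto (fun n => T (gs n) y) atTop (𝓝 xM),
        ∃ M'' : Set X, M''.Nonempty ∧ IsClosed M'' ∧ ActInvariant T M'' ∧
          ∀ U : Set X, IsOpen U → (U ∩ M'').Nonempty →
            SyndeticSet {g : G | T g x₀ ∈ U},
        ∃ U : ℕ → Set X, (∀ n, IsOpen (U n)) ∧ (∀ n, (U n).Nonempty) ∧
          Tendsto (fun n => Metric.diam (U n)) atTop (𝓝 0) ∧
          ∀ n, SyndeticSet {g : G | T g x₀ ∈ U n} ] :=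
  essentially_minimal_tfae_general T hcont hcomp x₀ hx₀
end
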